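/- arXiv:2504.14475 — 16 statements merged into one kernel-verified Lean document; each statement's English description precedes it below -/
import Mathlib

section
/- Let (L, ≤) be a partial order and let s, t : L → L be monotone functions such that s x ≤ t x for all x ∈ L, s ∘ s ∘ s = s, and t ∘ t ∘ t = t. Then (s ∘ t) ∘ (s ∘ t) = s ∘ t and (t ∘ s) ∘ (t ∘ s) = t ∘ s. -/
/-- Chittenden's theorem: if `s ≤ t` are monotone operators on a poset with
`s∘s∘s = s` and `t∘t∘t = t`, then `s∘t` and `t∘s` are idempotent. -/
theorem chittenden_idempotent {L : Type*} [PartialOrder L] (s t : L → L)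
    (hs : Monotone s) (ht : Monotone t) (hst : ∀ x, s x ≤ t x)
    (hs3 : s ∘ s ∘ s = s) (ht3 : t ∘ t ∘ t = t) :
    (s ∘ t) ∘ (s ∘ t) = s ∘ t ∧ (t ∘ s) ∘ (t ∘ s) = t ∘ s := by
  have hs3' : ∀ x, s (s (s x)) = s x := fun x => congrFun hs3 x
  have ht3' : ∀ x, t (t (t x)) = t x := fun x => congrFun ht3 x
  constructor
  · funext x
    apply le_antisymm
    · calc s (t (s (t x))) ≤ s (t (t (t x))) := hs (ht (hst (t x)))
        _ = s (t x) := by rw [ht3']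
    · calc s (t x) = s (s (s (t x))) := (hs3' (t x)).symm
        _ ≤ s (t (s (t x))) := hs (hst (s (t x)))
  · funext x
    apply le_antisymm
    · calc t (s (t (s x))) ≤ t (t (t (s x))) := ht (hst (t (s x)))
        _ = t (s x) := ht3' (s x)
    · calc t (s x) = t (s (s (s x))) := by rw [hs3']
        _ ≤ t (s (t (s x))) := ht (hs (hst (s x)))
end

section
/- Let (L, ≤) be a partial order, p : L → L a pseudocomplement operator (a ≤ p x ⟺ x ≤ p a for all a, x), i : L → L an interior operator (monotone, i x ≤ x, i ∘ i = i), and set b := p ∘ i ∘ p. Assume p (p (i x)) = i x for all x ∈ L. Then the following operator identities hold: i ∘ p ∘ p ∘ i = i; i ∘ p = p ∘ b; i ∘ p ∘ p = p ∘ b ∘ p; i ∘ b = p ∘ p ∘ i ∘ b; i ∘ b ∘ i = p ∘ p ∘ i ∘ b ∘ i; i ∘ b ∘ i ∘ p ∘ p = p ∘ p ∘ i ∘ b ∘ i ∘ p ∘ p; i ∘ p ∘ i = p ∘ b ∘ i; i ∘ b ∘ i ∘ p = p ∘ b ∘ i ∘ b; i ∘ b ∘ p = p ∘ b ∘ i ∘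 p ∘ p. -/
/-- If `p` is a pseudocomplement operator, `i` an interior operator,
`b = p ∘ i ∘ p`, and `p (p (i x)) = i x` for all `x`, then the equation
`i = p ∘ p ∘ i` collapses the interior–pseudocomplement monoid via the
listed operator identities. -/
theorem ip_collapse_identities {L : Type*} [PartialOrder L] (p i : L → L)
    (hp : ∀ a x, a ≤ p x ↔ x ≤ p a)
    (hi : Monotone i) (hile : ∀ x, i x ≤ x) (hii : i ∘ i = i)
    (b : L → L) (hb : b = p ∘ i ∘ p)
    (hloc : ∀ x, p (p (i x)) = i x) :
    i ∘ p ∘ p ∘ i = i ∧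
    i ∘ p = p ∘ b ∧
    i ∘ p ∘ p = p ∘ b ∘ p ∧
    i ∘ b = p ∘ p ∘ i ∘ b ∧
    i ∘ b ∘ i = p ∘ p ∘ i ∘ b ∘ i ∧
    i ∘ b ∘ i ∘ p ∘ p = p ∘ p ∘ i ∘ b ∘ i ∘ p ∘ p ∧
    i ∘ p ∘ i = p ∘ b ∘ i ∧
    i ∘ b ∘ i ∘ p = p ∘ b ∘ i ∘ b ∧
    i ∘ b ∘ p = p ∘ b ∘ i ∘ p ∘ p := by
  have hiix : ∀ x, i (i x) = i x := fun x => congrFun hii x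
  subst hb
  refine ⟨?_, ?_, ?_, ?_, ?_, ?_, ?_, ?_, ?_⟩ <;> funext x <;>
    simp [Function.comp, hloc, hiix]
end

section
/- Let (L, ≤) be a partial order, let i : L → L be monotone with i x ≤ x for all x, let c : L → L be monotone with x ≤ c x for all x, and let p : L → L be antitone with p (p x) ≤ x for all x. Assume p ∘ p ∘ i = i, c ∘ p ∘ i = p ∘ i, and i ∘ p ∘ c = p ∘ c. Then p ∘ c ∘ p = i and i ∘ p ∘ p = i. -/
/-- Abstracting the coframe of sublocales: if `i` is deflationary monotone,
`c` inflationary monotone, `p` antitone with `p (p x) ≤ x`, and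
`p ∘ p ∘ i = i`, `c ∘ p ∘ i = p ∘ i`, `i ∘ p ∘ c = p ∘ c`, then
`p ∘ c ∘ p = i` and `i ∘ p ∘ p = i`. -/
theorem sublocale_b_eq_interior {L : Type*} [PartialOrder L] (i c p : L → L)
    (hi : Monotone i) (hile : ∀ x, i x ≤ x)
    (hc : Monotone c) (hcle : ∀ x, x ≤ c x)
    (hp : ∀ x y, x ≤ y → p y ≤ p x) (hpp : ∀ x, p (p x) ≤ x)
    (h1 : p ∘ p ∘ i = i) (h2 : c ∘ p ∘ i = p ∘ i) (h3 : i ∘ p ∘ c = p ∘ c) :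
    p ∘ c ∘ p = i ∧ i ∘ p ∘ p = i := by
  have h1' : ∀ x, p (p (i x)) = i x := fun x => congrFun h1 x
  have h2' : ∀ x, c (p (i x)) = p (i x) := fun x => congrFun h2 x
  have h3' : ∀ x, i (p (c x)) = p (c x) := fun x => congrFun h3 x
  have key : ∀ x, p (c (p x)) = i x := by
    intro x
    apply le_antisymm
    · -- p c p x = i (p c p x) ≤ i x since p c p x ≤ x
      have hle : p (c (p x)) ≤ x := le_trans (hp _ _ (hcle (p x))) (hpp x)
      calc p (c (p x)) = i (p (c (p x))) := (h3' (p x)).symm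
        _ ≤ i x := hi hle
    · -- i x = p p i x ≤ p (c (p x))
      have : c (p x) ≤ p (i x) := by
        calc c (p x) ≤ c (p (i x)) := hc (hp _ _ (hile x))
          _ = p (i x) := h2' x
      calc i x = p (p (i x)) := (h1' x).symm
        _ ≤ p (c (p x)) := hp _ _ this
  have hidem : ∀ x, i (i x) = i x := by
    intro x
    calc i (i x) = p (c (p (i x))) := (key (i x)).symm
      _ = p (p (i x)) := by rw [h2' x]
      _ = i x := h1' x
  refine ⟨funext key, funext fun x => ?_⟩
  apply le_antisymm
  · exact hi (hpp x)
  · have : i x ≤ p (p x) := by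
      calc i x = p (p (i x)) := (h1' x).symm
        _ ≤ p (p x) := hp _ _ (hp _ _ (hile x))
    calc i x = i (i x) := (hidem x).symm
      _ ≤ i (p (p x)) := hi this
end

section
/- Fix integers 2 ≤ m ≤ n and let ℓ = lcm(m−1, n−1). Let (L, ≤) be a partial order with monotone s, t : L → L satisfying s x ≤ t x for all x, s^[m] = s, and t^[n] = t. Then for every word w over {s, t} of length ℓ + 1, one has s ∘ ⟨w⟩ ∘ t = s ∘ t ∘ t and t ∘ ⟨w⟩ ∘ s = t ∘ t ∘ s. -/
/-- The composite of a word over `{s, t}`: `false` stands for `s`, `true` for `t`;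
entries are composed in order. -/
def wordComp {L : Type*} (s t : L → L) : List Bool → (L → L)
  | [] => id
  | b :: w => (if b then t else s) ∘ wordComp s t w

section Aux

variable {L : Type*} [PartialOrder L]

/-- periodicity of iterates: if `f^[a+1] = f` then `f^[j+1+k*a] = f^[j+1]`. -/
lemma iterPer (f : L → L) (a : ℕ) (hfa : f^[a+1] = f) :
    ∀ j k : ℕ, f^[j+1+k*a] = f^[j+1] := by
  intro j k
  induction k with
  | zero => simp
  | succ k ih =>
    have h1 : j+1+(k+1)*a = (j + k*a) + (a+1) := by ring
    rw [h1, Function.iterate_add, hfa, ← Function.iterate_succ]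
    have h2 : (j + k*a).succ = j+1+k*a := by omega
    rw [h2, ih]

lemma iterLe (s t : L → L) (hs : Monotone s) (hst : ∀ x, s x ≤ t x) :
    ∀ (k : ℕ) (x : L), s^[k] x ≤ t^[k] x := by
  intro k
  induction k with
  | zero => intro x; simp
  | succ k ih =>
    intro x
    rw [Function.iterate_succ_apply', Function.iterate_succ_apply']
    exact le_trans (hs (ih x)) (hst _)

/-- trading: replace trailing `s`'s by `t`'s, going up. -/
lemma trade (s t : L → L) (hs : Monotone s) (hst : ∀ x, s x ≤ t x) :
    ∀ (k i j : ℕ) (x : L), s^[i+k] (t^[j] x) ≤ s^[i] (t^[j+k] x) := by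
  intro k
  induction k with
  | zero => intro i j x; simp
  | succ k ih =>
    intro i j x
    have h1 : i + (k+1) = (i+1) + k := by ring
    calc s^[i+(k+1)] (t^[j] x) = s^[(i+1)+k] (t^[j] x) := by rw [h1]
      _ ≤ s^[i+1] (t^[j+k] x) := ih (i+1) j x
      _ = s^[i] (s (t^[j+k] x)) := by rw [Function.iterate_succ_apply]
      _ ≤ s^[i] (t (t^[j+k] x)) := (hs.iterate i) (hst _)
      _ = s^[i] (t^[j+(k+1)] x) := by
          have h2 : j+(k+1) = (j+k)+1 := by ring
          rw [h2, Function.iterate_succ_apply']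

/-- absorbing extra blocks of `s^[b]` in front of `t^[j+1]`, downward. -/
lemma absorb (s t : L → L) (hs : Monotone s) (hst : ∀ x, s x ≤ t x)
    (b : ℕ) (htb : t^[b+1+1] = t) :
    ∀ (k j : ℕ) (x : L),
      s^[1 + k*(b+1) + (b+1)] (t^[j+1] x) ≤ s^[1+(b+1)] (t^[j+1] x) := by
  intro k
  induction k with
  | zero => intro j x; simp
  | succ k ih =>
    intro j x
    have h1 : 1 + (k+1)*(b+1) + (b+1) = (1 + k*(b+1) + (b+1)) + (b+1) := by ring
    have h2 : t^[b+1] (t^[j+1] x) = t^[j+1] x := by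
      have h3 : (b+1) + (j+1) = j+1+(1:ℕ)*(b+1) := by ring
      rw [← Function.iterate_add_apply, h3, iterPer t (b+1) htb j 1]
    calc s^[1 + (k+1)*(b+1) + (b+1)] (t^[j+1] x)
        = s^[1 + k*(b+1) + (b+1)] (s^[b+1] (t^[j+1] x)) := by
          rw [h1, Function.iterate_add_apply]
      _ ≤ s^[1 + k*(b+1) + (b+1)] (t^[b+1] (t^[j+1] x)) :=
          (hs.iterate _) (iterLe s t hs hst (b+1) _)
      _ = s^[1 + k*(b+1) + (b+1)] (t^[j+1] x) := by rw [h2]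
      _ ≤ s^[1+(b+1)] (t^[j+1] x) := ih j x

/-- Key identity: `s ∘ s ∘ t = s ∘ t ∘ t`. -/
lemma keyId (a b : ℕ) (s t : L → L) (hs : Monotone s) (ht : Monotone t)
    (hst : ∀ x, s x ≤ t x) (hsa : s^[a+1+1] = s) (htb : t^[b+1+1] = t) :
    ∀ x : L, s (s (t x)) = s (t (t x)) := by
  intro x
  apply le_antisymm
  · exact hs (hst (t x))
  · have e1 : s (t (t x)) = s^[1] (t^[2] x) := by simp
    have e2 : s^[1] (t^[2] x) = s^[1 + a*(b+1) + (b+1)] (t^[2] x) := by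
      have h : 1 + a*(b+1) + (b+1) = 0+1+(b+1)*(a+1) := by ring
      rw [h, iterPer s (a+1) hsa 0 (b+1)]
    have e3 : s^[1 + a*(b+1) + (b+1)] (t^[2] x) ≤ s^[1+(b+1)] (t^[2] x) :=
      absorb s t hs hst b htb a 1 x
    have e4 : s^[1+(b+1)] (t^[2] x) ≤ s^[2] (t^[2+b] x) := by
      have h : 1+(b+1) = 2 + b := by ring
      rw [h]
      exact trade s t hs hst b 2 2 x
    have e5 : s^[2] (t^[2+b] x) = s (s (t x)) := by
      have h : (2+b : ℕ) = b+1+1 := by ring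
      rw [h, htb]
      simp
    calc s (t (t x)) = s^[1] (t^[2] x) := e1
      _ = s^[1 + a*(b+1) + (b+1)] (t^[2] x) := e2
      _ ≤ s^[1+(b+1)] (t^[2] x) := e3
      _ ≤ s^[2] (t^[2+b] x) := e4
      _ = s (s (t x)) := e5

lemma sandwich (s t : L → L) (hs : Monotone s) (ht : Monotone t)
    (hst : ∀ x, s x ≤ t x) :
    ∀ (w : List Bool) (x : L),
      s^[w.length] x ≤ wordComp s t w x ∧ wordComp s t w x ≤ t^[w.length] x := by
  intro w
  induction w with
  | nil => intro x; simp [wordComp]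
  | cons b w ih =>
    intro x
    obtain ⟨h1, h2⟩ := ih x
    constructor
    · calc s^[w.length + 1] x = s (s^[w.length] x) := Function.iterate_succ_apply' s _ x
        _ ≤ s (wordComp s t w x) := hs h1
        _ ≤ (if b then t else s) (wordComp s t w x) := by
            cases b <;> simp [hst _]
        _ = wordComp s t (b :: w) x := rfl
    · calc wordComp s t (b :: w) x = (if b then t else s) (wordComp s t w x) := rfl
        _ ≤ t (wordComp s t w x) := by cases b <;> simp [hst _]
        _ ≤ t (t^[w.length] x) := ht h2
        _ = t^[w.length + 1] x := (Function.iterate_succ_apply' t _ x).symm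

end Aux

/-- Lemma: with `ℓ = lcm (m-1) (n-1)`, for every word `w` over `{s,t}` of
length `ℓ + 1`, `s ∘ ⟨w⟩ ∘ t = s ∘ t ∘ t` and `t ∘ ⟨w⟩ ∘ s = t ∘ t ∘ s`. -/
theorem swt_eq_stt {L : Type*} [PartialOrder L] (m n : ℕ)
    (hm : 2 ≤ m) (hmn : m ≤ n)
    (s t : L → L) (hs : Monotone s) (ht : Monotone t) (hst : ∀ x, s x ≤ t x)
    (hsm : s^[m] = s) (htn : t^[n] = t) :
    ∀ w : List Bool, w.length = Nat.lcm (m - 1) (n - 1) + 1 →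
      s ∘ wordComp s t w ∘ t = s ∘ t ∘ t ∧
      t ∘ wordComp s t w ∘ s = t ∘ t ∘ s := by
  obtain ⟨A, rfl⟩ : ∃ A, m = A + 2 := ⟨m - 2, by omega⟩
  obtain ⟨B, rfl⟩ : ∃ B, n = B + 2 := ⟨n - 2, by omega⟩
  have hA : A + 2 - 1 = A + 1 := by omega
  have hB : B + 2 - 1 = B + 1 := by omega
  rw [hA, hB] at *
  have hsa : s^[A+1+1] = s := hsm
  have htb : t^[B+1+1] = t := htn
  -- periodicity at the lcm
  obtain ⟨p, hp⟩ : (A+1) ∣ Nat.lcm (A+1) (B+1) := Nat.dvd_lcm_left _ _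
  obtain ⟨q, hq⟩ : (B+1) ∣ Nat.lcm (A+1) (B+1) := Nat.dvd_lcm_right _ _
  set ℓ := Nat.lcm (A+1) (B+1) with hℓ
  have hsℓ : s^[ℓ+1] = s := by
    have h : ℓ + 1 = 0 + 1 + p*(A+1) := by rw [hp]; ring
    rw [h, iterPer s (A+1) hsa 0 p]; simp
  have htℓ : t^[ℓ+1] = t := by
    have h : ℓ + 1 = 0 + 1 + q*(B+1) := by rw [hq]; ring
    rw [h, iterPer t (B+1) htb 0 q]; simp
  have key1 : ∀ x, s (s (t x)) = s (t (t x)) :=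
    keyId A B s t hs ht hst hsa htb
  have key2 : ∀ x : L, t (t (s x)) = t (s (s x)) :=
    keyId (L := Lᵒᵈ) B A t s ht.dual hs.dual (fun x => hst x) htb hsa
  intro w hw
  constructor
  · funext x
    simp only [Function.comp_apply]
    obtain ⟨h1, h2⟩ := sandwich s t hs ht hst w (t x)
    rw [hw, hsℓ] at h1
    rw [hw, htℓ] at h2
    exact le_antisymm (le_trans (hs h2) (le_of_eq rfl))
      (le_trans (le_of_eq (key1 x).symm) (hs h1))
  · funext x
    simp only [Function.comp_apply]
    obtain ⟨h1, h2⟩ := sandwich s t hs ht hst w (s x)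
    rw [hw, hsℓ] at h1
    rw [hw, htℓ] at h2
    exact le_antisymm (le_trans (ht h2) (le_of_eq rfl))
      (le_trans (le_of_eq (key2 x)) (ht h1))
end

section
/- Fix integers 2 ≤ m ≤ n. Let (L, ≤) be a partial order with monotone s, t : L → L satisfying s x ≤ t x for all x, s^[m] = s, and t^[n] = t. Then for all integers k ≥ 1 and 1 ≤ j ≤ k, one has s^[j] ∘ t^[k+1−j] = s^[k] ∘ t and t^[j] ∘ s^[k+1−j] = t^[k] ∘ s. -/
section aux

variable {L : Type*} [PartialOrder L]

private lemma iter_le (s t : L → L) (hs : Monotone s) (hst : ∀ x, s x ≤ t x)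
    (ht : Monotone t) : ∀ r x, s^[r] x ≤ t^[r] x := by
  intro r
  induction r with
  | zero => intro x; exact le_rfl
  | succ r ih =>
    intro x
    rw [Function.iterate_succ_apply', Function.iterate_succ_apply']
    exact (hs (ih x)).trans (hst _)

private lemma word_le (s t : L → L) (hs : Monotone s) (ht : Monotone t)
    (hst : ∀ x, s x ≤ t x) :
    ∀ p q p' q' : ℕ, p' ≤ p → p + q = p' + q' → ∀ x : L,
      s^[p] (t^[q] x) ≤ s^[p'] (t^[q'] x) := by
  intro p q p' q' hpp hsum x
  obtain ⟨d, rfl⟩ := Nat.exists_eq_add_of_le hpp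
  have hq : q' = d + q := by omega
  subst hq
  calc s^[p' + d] (t^[q] x) = s^[p'] (s^[d] (t^[q] x)) := by
        rw [Function.iterate_add_apply]
    _ ≤ s^[p'] (t^[d] (t^[q] x)) := (hs.iterate p') (iter_le s t hs hst ht d _)
    _ = s^[p'] (t^[d + q] x) := by rw [Function.iterate_add_apply]

private lemma word_le' (s t : L → L) (hs : Monotone s) (ht : Monotone t)
    (hst : ∀ x, s x ≤ t x) :
    ∀ p q p' q' : ℕ, p ≤ p' → p + q = p' + q' → ∀ x : L,
      t^[p] (s^[q] x) ≤ t^[p'] (s^[q'] x) := by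
  intro p q p' q' hpp hsum x
  obtain ⟨d, rfl⟩ := Nat.exists_eq_add_of_le hpp
  have hq : q = d + q' := by omega
  subst hq
  calc t^[p] (s^[d + q'] x) = t^[p] (s^[d] (s^[q'] x)) := by
        rw [Function.iterate_add_apply]
    _ ≤ t^[p] (t^[d] (s^[q'] x)) := (ht.iterate p) (iter_le s t hs hst ht d _)
    _ = t^[p + d] (s^[q'] x) := by rw [Function.iterate_add_apply]

private lemma periodic (s : L → L) (m : ℕ) (hm : 1 ≤ m) (hsm : s^[m] = s) :
    ∀ q : ℕ, s^[q * (m - 1) + 1] = s := by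
  intro q
  induction q with
  | zero => simp
  | succ q ih =>
    have h : (q + 1) * (m - 1) + 1 = (m - 1) + (q * (m - 1) + 1) := by ring_nf
    rw [h, Function.iterate_add, ih, ← Function.iterate_succ]
    rw [show (m - 1).succ = m from by omega, hsm]

end aux

/-- Lemma: `s^[k] ∘ t = s^[k-1] ∘ t^[2] = ⋯ = s ∘ t^[k]` and dually, i.e.
for all `k ≥ 1` and `1 ≤ j ≤ k`, `s^[j] ∘ t^[k+1-j] = s^[k] ∘ t` and
`t^[j] ∘ s^[k+1-j] = t^[k] ∘ s`. -/
theorem mixed_iterate_slide {L : Type*} [PartialOrder L] (m n : ℕ)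
    (hm : 2 ≤ m) (hmn : m ≤ n)
    (s t : L → L) (hs : Monotone s) (ht : Monotone t) (hst : ∀ x, s x ≤ t x)
    (hsm : s^[m] = s) (htn : t^[n] = t) :
    ∀ k j : ℕ, 1 ≤ k → 1 ≤ j → j ≤ k →
      s^[j] ∘ t^[k + 1 - j] = s^[k] ∘ t ∧
      t^[j] ∘ s^[k + 1 - j] = t^[k] ∘ s := by
  have hn : 2 ≤ n := hm.trans hmn
  have hps := periodic s m (by omega) hsm
  have hpt := periodic t n (by omega) htn
  -- key identity 1 : s ∘ t ∘ t = s ∘ s ∘ t pointwise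
  have key1 : ∀ x, s (t (t x)) = s (s (t x)) := by
    intro x
    apply le_antisymm
    · have h1 : s (t (t x)) = s^[(n-1) * (m-1) + 1] (t^[2] x) := by
        rw [hps (n-1)]
        simp [Function.iterate_succ_apply']
      have h2 : s^[2] (t^[(m-1) * (n-1) + 1] x) = s (s (t x)) := by
        rw [hpt (m-1)]
        simp [Function.iterate_succ_apply']
      rw [h1, ← h2]
      apply word_le s t hs ht hst
      · have h3 : 1 * 1 ≤ (n-1) * (m-1) := Nat.mul_le_mul (by omega) (by omega)
        exact Nat.succ_le_succ (by simpa using h3)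
      · rw [Nat.mul_comm (n-1) (m-1)]; ring
    · exact hs (hst _)
  -- key identity 2 : t ∘ t ∘ s = t ∘ s ∘ s pointwise
  have key2 : ∀ x, t (t (s x)) = t (s (s x)) := by
    intro x
    apply le_antisymm
    · have h1 : t (t (s x)) = t^[2] (s^[(n-1) * (m-1) + 1] x) := by
        rw [hps (n-1)]
        simp [Function.iterate_succ_apply']
      have h2 : t^[(m-1) * (n-1) + 1] (s^[2] x) = t (s (s x)) := by
        rw [hpt (m-1)]
        simp [Function.iterate_succ_apply']
      rw [h1, ← h2]
      apply word_le' s t hs ht hst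
      · have h3 : 1 * 1 ≤ (m-1) * (n-1) := Nat.mul_le_mul (by omega) (by omega)
        exact Nat.succ_le_succ (by simpa using h3)
      · rw [Nat.mul_comm (n-1) (m-1)]; ring
    · exact ht (hst _)
  -- slide : s (t^[k+1] x) = s^[k+1] (t x)
  have slide1 : ∀ k x, s (t^[k + 1] x) = s^[k + 1] (t x) := by
    intro k
    induction k with
    | zero => intro x; simp
    | succ k ih =>
      intro x
      have h1 : t^[k + 1 + 1] x = t (t (t^[k] x)) := by
        rw [Function.iterate_succ_apply', Function.iterate_succ_apply']
      rw [h1, key1 (t^[k] x)]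
      have h2 : t (t^[k] x) = t^[k + 1] x := (Function.iterate_succ_apply' t k x).symm
      rw [h2, ih x, ← Function.iterate_succ_apply' s (k+1) (t x)]
  have slide2 : ∀ k x, t (s^[k + 1] x) = t^[k + 1] (s x) := by
    intro k
    induction k with
    | zero => intro x; simp
    | succ k ih =>
      intro x
      have h1 : s^[k + 1 + 1] x = s (s (s^[k] x)) := by
        rw [Function.iterate_succ_apply', Function.iterate_succ_apply']
      rw [h1, ← key2 (s^[k] x)]
      have h2 : s (s^[k] x) = s^[k + 1] x := (Function.iterate_succ_apply' s k x).symm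
      rw [show t (t (s (s^[k] x))) = t (t (s^[k+1] x)) by rw [h2], ih x,
        ← Function.iterate_succ_apply' t (k+1) (s x)]
  intro k j hk hj hjk
  constructor
  · funext x
    simp only [Function.comp_apply]
    obtain ⟨j', rfl⟩ : ∃ j', j = j' + 1 := ⟨j - 1, by omega⟩
    obtain ⟨r, hr⟩ : ∃ r, k + 1 - (j' + 1) = r + 1 := ⟨k - 1 - j', by omega⟩
    rw [hr]
    rw [show (j' + 1) = j' + 1 from rfl, Function.iterate_add_apply s j' 1 _,
      Function.iterate_one, slide1 r x, ← Function.iterate_add_apply]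
    congr 1
    omega
  · funext x
    simp only [Function.comp_apply]
    obtain ⟨j', rfl⟩ : ∃ j', j = j' + 1 := ⟨j - 1, by omega⟩
    obtain ⟨r, hr⟩ : ∃ r, k + 1 - (j' + 1) = r + 1 := ⟨k - 1 - j', by omega⟩
    rw [hr]
    rw [Function.iterate_add_apply t j' 1 _, Function.iterate_one, slide2 r x,
      ← Function.iterate_add_apply]
    congr 1
    omega
end

section
/- Fix integers 2 ≤ m ≤ n and let d = gcd(m−1, n−1). Let (L, ≤) be a partial order with monotone s, t : L → L satisfying s x ≤ t x for all x, s^[m] = s, and t^[n] = t. Then for every integer k ≥ 1, s^[k·d + 1] ∘ t = s ∘ t and t^[k·d + 1] ∘ s = t ∘ s. -/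
/-- Bézout-type lemma in ℕ: if `gcd a b ∣ M` with `a b > 0`, there are
naturals `q r` with `q * a = M + r * b`. -/
lemma bezout_aux (a b M : ℕ) (ha : 0 < a) (hb : 0 < b) (h : Nat.gcd a b ∣ M) :
    ∃ q r : ℕ, q * a = M + r * b := by
  obtain ⟨c, hc⟩ := h
  set x := Nat.gcdA a b with hx
  set y := Nat.gcdB a b with hy
  have hbez : (Nat.gcd a b : ℤ) = a * x + b * y := Nat.gcd_eq_gcd_ab a b
  set K : ℕ := c * (x.natAbs + y.natAbs) + 1 with hK
  have hxa : x ≤ (x.natAbs : ℤ) := Int.le_natAbs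
  have hxa' : -(x.natAbs : ℤ) ≤ x := by omega
  have hya : y ≤ (y.natAbs : ℤ) := Int.le_natAbs
  have hya' : -(y.natAbs : ℤ) ≤ y := by omega
  have ha' : (1 : ℤ) ≤ a := by exact_mod_cast ha
  have hb' : (1 : ℤ) ≤ b := by exact_mod_cast hb
  have hc0 : (0 : ℤ) ≤ (c : ℤ) := Int.natCast_nonneg c
  have hKval : (K : ℤ) = c * (x.natAbs + y.natAbs) + 1 := by push_cast [hK]; ring
  clear_value x y K
  have hq : (0 : ℤ) ≤ (c : ℤ) * x + K * b := by nlinarith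
  have hr : (0 : ℤ) ≤ (K : ℤ) * a - c * y := by nlinarith
  refine ⟨((c : ℤ) * x + K * b).toNat, ((K : ℤ) * a - c * y).toNat, ?_⟩
  have e1 : (((c : ℤ) * x + K * b).toNat : ℤ) = (c : ℤ) * x + K * b :=
    Int.toNat_of_nonneg hq
  have e2 : (((K : ℤ) * a - c * y).toNat : ℤ) = (K : ℤ) * a - c * y :=
    Int.toNat_of_nonneg hr
  have hM : (M : ℤ) = (Nat.gcd a b : ℤ) * c := by exact_mod_cast hc
  refine Nat.cast_inj (R := ℤ) |>.mp ?_
  push_cast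
  rw [e1, e2]
  linear_combination -(c : ℤ) * hbez - hM

/-- Lemma: with `d = gcd (m-1) (n-1)`, `s^[k·d+1] ∘ t = s ∘ t` and
`t^[k·d+1] ∘ s = t ∘ s` for all `k ≥ 1`. -/
theorem gcd_period_mixed {L : Type*} [PartialOrder L] (m n : ℕ)
    (hm : 2 ≤ m) (hmn : m ≤ n)
    (s t : L → L) (hs : Monotone s) (ht : Monotone t) (hst : ∀ x, s x ≤ t x)
    (hsm : s^[m] = s) (htn : t^[n] = t) :
    ∀ k : ℕ, 1 ≤ k →
      s^[k * Nat.gcd (m - 1) (n - 1) + 1] ∘ t = s ∘ t ∧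
      t^[k * Nat.gcd (m - 1) (n - 1) + 1] ∘ s = t ∘ s := by
  intro k hk
  have ha1 : m - 1 + 1 = m := by omega
  have hb1 : n - 1 + 1 = n := by omega
  have ha : 0 < m - 1 := by omega
  have hb : 0 < n - 1 := by omega
  have hspow : ∀ q : ℕ, s^[q * (m - 1) + 1] = s := by
    intro q
    induction q with
    | zero => simp
    | succ q ih =>
      have h1 : (q + 1) * (m - 1) + 1 = (m - 1) + (q * (m - 1) + 1) := by ring
      rw [h1, Function.iterate_add, ih, ← Function.iterate_succ,
        Nat.succ_eq_add_one, ha1, hsm]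
  have htpow : ∀ q : ℕ, t^[q * (n - 1) + 1] = t := by
    intro q
    induction q with
    | zero => simp
    | succ q ih =>
      have h1 : (q + 1) * (n - 1) + 1 = (n - 1) + (q * (n - 1) + 1) := by ring
      rw [h1, Function.iterate_add, ih, ← Function.iterate_succ,
        Nat.succ_eq_add_one, hb1, htn]
  have hiter_le : ∀ j (x : L), s^[j] x ≤ t^[j] x := by
    intro j
    induction j with
    | zero => intro x; simp
    | succ j ih =>
      intro x
      rw [Function.iterate_succ_apply', Function.iterate_succ_apply']
      exact le_trans (hs (ih x)) (hst _)
  set d := Nat.gcd (m - 1) (n - 1) with hd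
  set M := k * d with hMdef
  have hdvd1 : Nat.gcd (m - 1) (n - 1) ∣ M := dvd_mul_left d k
  have hdvd2 : Nat.gcd (n - 1) (m - 1) ∣ M := by rw [Nat.gcd_comm]; exact hdvd1
  obtain ⟨q, r, hqr⟩ := bezout_aux (m - 1) (n - 1) M ha hb hdvd1
  obtain ⟨q', r', hqr'⟩ := bezout_aux (n - 1) (m - 1) M hb ha hdvd2
  -- hqr  : q * (m-1) = M + r * (n-1)
  -- hqr' : q' * (n-1) = M + r' * (m-1)
  constructor <;> funext x <;> simp only [Function.comp_apply]
  · -- s^[M+1] (t x) = s (t x)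
    apply le_antisymm
    · -- s^[M+1] (t x) ≤ s (t x)
      have e : s^[M + 1] (t x) = s^[q' * (n - 1) + 1] (t x) := by
        conv_rhs => rw [show q' * (n - 1) + 1 = M + (r' * (m - 1) + 1) from by
          rw [hqr']; ring, Function.iterate_add_apply, hspow r']
        exact Function.iterate_succ_apply s M (t x)
      rw [e, Function.iterate_succ_apply']
      refine le_trans (hs (hiter_le _ _)) (le_of_eq ?_)
      rw [← Function.iterate_succ_apply, htpow]
    · -- s (t x) ≤ s^[M+1] (t x)
      have e : s (t x) = s^[M + 1] (s^[r * (n - 1)] (t x)) := by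
        conv_lhs => rw [← hspow q]
        rw [hqr, show M + r * (n - 1) + 1 = (M + 1) + r * (n - 1) from by ring,
          Function.iterate_add_apply]
      rw [e]
      calc s^[M + 1] (s^[r * (n - 1)] (t x))
          ≤ s^[M + 1] (t^[r * (n - 1)] (t x)) := (hs.iterate _) (hiter_le _ _)
        _ = s^[M + 1] (t x) := by rw [← Function.iterate_succ_apply, htpow]
  · -- t^[M+1] (s x) = t (s x)
    apply le_antisymm
    · -- t^[M+1] (s x) ≤ t (s x)
      have e : t (s x) = t^[M + 1] (t^[r' * (m - 1)] (s x)) := by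
        conv_lhs => rw [← htpow q']
        rw [hqr', show M + r' * (m - 1) + 1 = (M + 1) + r' * (m - 1) from by ring,
          Function.iterate_add_apply]
      rw [e]
      have h1 : s x = s^[r' * (m - 1)] (s x) := by
        conv_lhs => rw [← hspow r', Function.iterate_succ_apply]
      calc t^[M + 1] (s x) = t^[M + 1] (s^[r' * (m - 1)] (s x)) := by rw [← h1]
        _ ≤ t^[M + 1] (t^[r' * (m - 1)] (s x)) := (ht.iterate _) (hiter_le _ _)
    · -- t (s x) ≤ t^[M+1] (s x)
      have e : t^[M + 1] (s x) = t (t^[q * (m - 1)] (s x)) := by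
        have e2 : t^[M + 1] (s x) = t^[q * (m - 1) + 1] (s x) := by
          conv_rhs => rw [show q * (m - 1) + 1 = M + (r * (n - 1) + 1) from by
            rw [hqr]; ring, Function.iterate_add_apply, htpow r]
          exact Function.iterate_succ_apply t M (s x)
        rw [e2, Function.iterate_succ_apply']
      rw [e]
      have h1 : s x = s^[q * (m - 1)] (s x) := by
        conv_lhs => rw [← hspow q, Function.iterate_succ_apply]
      calc t (s x) = t (s^[q * (m - 1)] (s x)) := by rw [← h1]
        _ ≤ t (t^[q * (m - 1)] (s x)) := ht (hiter_le _ _)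
end

section
/- Fix integers 2 ≤ m ≤ n. Let (L, ≤) be a partial order with monotone s, t : L → L satisfying s x ≤ t x for all x, s^[m] = s, and t^[n] = t. Then for every (possibly empty) word w over {s, t} of length r, one has s ∘ ⟨w⟩ ∘ t = s ∘ t^[r+1] and t ∘ ⟨w⟩ ∘ s = t ∘ s^[r+1]. -/
lemma wordComp_upper {L : Type*} [PartialOrder L] (s t : L → L)
    (ht : Monotone t) (hst : ∀ x, s x ≤ t x) :
    ∀ (w : List Bool) (x : L), wordComp s t w x ≤ t^[w.length] x := by
  intro w
  induction w with
  | nil => intro x; simp [wordComp]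
  | cons b w ih =>
    intro x
    have h1 : (if b then t else s) (wordComp s t w x) ≤ t (wordComp s t w x) := by
      cases b <;> simp [hst _]
    calc wordComp s t (b :: w) x ≤ t (wordComp s t w x) := h1
      _ ≤ t (t^[w.length] x) := ht (ih x)
      _ = t^[w.length + 1] x := (Function.iterate_succ_apply' t _ x).symm

lemma wordComp_lower {L : Type*} [PartialOrder L] (s t : L → L)
    (hs : Monotone s) (hst : ∀ x, s x ≤ t x) :
    ∀ (w : List Bool) (x : L), s^[w.length] x ≤ wordComp s t w x := by
  intro w
  induction w with
  | nil => intro x; simp [wordComp]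
  | cons b w ih =>
    intro x
    have h1 : s (wordComp s t w x) ≤ (if b then t else s) (wordComp s t w x) := by
      cases b <;> simp [hst _]
    calc s^[w.length + 1] x = s (s^[w.length] x) := Function.iterate_succ_apply' s _ x
      _ ≤ s (wordComp s t w x) := hs (ih x)
      _ ≤ wordComp s t (b :: w) x := h1

lemma wordComp_append' {L : Type*} (s t : L → L) (u v : List Bool) :
    wordComp s t (u ++ v) = wordComp s t u ∘ wordComp s t v := by
  induction u with
  | nil => simp [wordComp]
  | cons b u ih => simp [wordComp, ih, Function.comp_assoc]

lemma iterate_period {L : Type*} (f : L → L) (n : ℕ) (hn : 2 ≤ n)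
    (hf : f^[n] = f) : ∀ j, f^[j * (n - 1) + 1] = f := by
  intro j
  induction j with
  | zero => simp
  | succ j ih =>
    have : (j + 1) * (n - 1) + 1 = (n - 1) + (j * (n - 1) + 1) := by
      rw [Nat.add_mul, one_mul]; omega
    rw [this, Function.iterate_add, ih]
    have h2 : (n - 1) + 1 = n := by omega
    calc f^[n-1] ∘ f = f^[n-1] ∘ f^[1] := by simp
      _ = f^[n - 1 + 1] := (Function.iterate_add f _ _).symm
      _ = f := by rw [h2, hf]

/-- Lemma: for every word `w` of length `r`, `s ∘ ⟨w⟩ ∘ t = s ∘ t^[r+1]` and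
`t ∘ ⟨w⟩ ∘ s = t ∘ s^[r+1]`. -/
theorem swt_eq_s_t_pow {L : Type*} [PartialOrder L] (m n : ℕ)
    (hm : 2 ≤ m) (hmn : m ≤ n)
    (s t : L → L) (hs : Monotone s) (ht : Monotone t) (hst : ∀ x, s x ≤ t x)
    (hsm : s^[m] = s) (htn : t^[n] = t) :
    ∀ w : List Bool,
      s ∘ wordComp s t w ∘ t = s ∘ t^[w.length + 1] ∧
      t ∘ wordComp s t w ∘ s = t ∘ s^[w.length + 1] := by
  intro w
  set r := w.length with hr
  have hn2 : 2 ≤ n := le_trans hm hmn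
  -- the common padding amount K = r*(m-1)*(n-1)
  set K := r * (m - 1) * (n - 1) with hK
  have hKr : r ≤ K := by
    have h1 : 1 ≤ m - 1 := by omega
    have h2 : 1 ≤ n - 1 := by omega
    calc r = r * 1 * 1 := by ring
      _ ≤ r * (m - 1) * (n - 1) := by
          exact Nat.mul_le_mul (Nat.mul_le_mul_left r h1) h2
  have hsK : s^[K + 1] = s := by
    have : K = (r * (n - 1)) * (m - 1) := by ring
    rw [this]; exact iterate_period s m hm hsm _
  have htK : t^[K + 1] = t := by
    have : K = (r * (m - 1)) * (n - 1) := by ring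
    rw [this]; exact iterate_period t n hn2 htn _
  constructor
  · funext x
    simp only [Function.comp_apply]
    apply le_antisymm
    · -- s (w (t x)) ≤ s (t^[r+1] x)
      have := wordComp_upper s t ht hst w (t x)
      have h2 : t^[r] (t x) = t^[r + 1] x := by
        rw [Function.iterate_succ_apply]
      exact hs (by rw [← h2]; exact this)
    · -- s (t^[r+1] x) ≤ s (w (t x))
      -- s (t^[r+1] x) = s (s^[K] (t^[r+1] x)) via hsK
      have e1 : s (t^[r + 1] x) = s (s^[K] (t^[r + 1] x)) := by
        conv_lhs => rw [← hsK]
        rw [Function.iterate_succ_apply']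
      rw [e1]
      apply hs
      -- s^[K] (t^[r+1] x) ≤ wordComp (w ++ replicate (K-r) true) (t^[r+1] x)
      --                   = w (t^[K-r] (t^[r+1] x)) = w (t^[K+1] x) = w (t x)
      have hlen : (w ++ List.replicate (K - r) true).length = K := by
        simp [← hr]; omega
      have hlow := wordComp_lower s t hs hst (w ++ List.replicate (K - r) true)
        (t^[r + 1] x)
      rw [hlen, wordComp_append'] at hlow
      have hrep : ∀ k y, wordComp s t (List.replicate k true) y = t^[k] y := by
        intro k
        induction k with
        | zero => intro y; simp [wordComp]
        | succ k ih =>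
          intro y
          simp only [List.replicate_succ, wordComp, Function.comp_apply, if_true]
          rw [ih, ← Function.iterate_succ_apply' t]
      rw [Function.comp_apply, hrep] at hlow
      have e2 : t^[K - r] (t^[r + 1] x) = t x := by
        rw [← Function.iterate_add_apply]
        have : K - r + (r + 1) = K + 1 := by omega
        rw [this, htK]
      rwa [e2] at hlow
  · funext x
    simp only [Function.comp_apply]
    apply le_antisymm
    · -- t (w (s x)) ≤ t (s^[r+1] x)
      -- w (s x) = w (s^[K-r] (s^[r+1] x)) ≤ t^[K] (s^[r+1] x), then t, period
      have e1 : s x = s^[K - r] (s^[r + 1] x) := by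
        rw [← Function.iterate_add_apply]
        have : K - r + (r + 1) = K + 1 := by omega
        rw [this, hsK]
      rw [e1]
      have hrep : ∀ k y, wordComp s t (List.replicate k false) y = s^[k] y := by
        intro k
        induction k with
        | zero => intro y; simp [wordComp]
        | succ k ih =>
          intro y
          simp only [List.replicate_succ, wordComp, Function.comp_apply]
          rw [if_neg (by simp), ih, ← Function.iterate_succ_apply' s]
      have hlen : (w ++ List.replicate (K - r) false).length = K := by
        simp [← hr]; omega
      have hup := wordComp_upper s t ht hst (w ++ List.replicate (K - r) false)
        (s^[r + 1] x)
      rw [hlen, wordComp_append', Function.comp_apply, hrep] at hup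
      calc t (wordComp s t w (s^[K - r] (s^[r + 1] x)))
          ≤ t (t^[K] (s^[r + 1] x)) := ht hup
        _ = t^[K + 1] (s^[r + 1] x) := (Function.iterate_succ_apply' t _ _).symm
        _ = t (s^[r + 1] x) := by rw [htK]
    · -- t (s^[r+1] x) ≤ t (w (s x))
      have := wordComp_lower s t hs hst w (s x)
      have h2 : s^[r] (s x) = s^[r + 1] x := by
        rw [Function.iterate_succ_apply]
      exact ht (by rw [← h2]; exact this)
end

section
/- Fix integers 2 ≤ m ≤ n. Let (L, ≤) be a partial order with monotone s, t : L → L satisfying s x ≤ t x for all x, s^[m] = s, and t^[n] = t. Then for all (possibly empty) words w, w' over {s, t} of lengths r and r' respectively, one has s ∘ ⟨w⟩ ∘ t ∘ ⟨w'⟩ ∘ s = s ∘ t^[r+r'+1] ∘ s and t ∘ ⟨w⟩ ∘ s ∘ ⟨w'⟩ ∘ t = t ∘ s^[r+r'+1] ∘ t. -/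
section AuxLemmas

private lemma iter_per {L : Type*} {f : L → L} {p : ℕ} (hf : f^[p+1] = f) :
    ∀ (k a : ℕ), 1 ≤ a → f^[a + k*p] = f^[a] := by
  have step : ∀ b, f^[b+1+p] = f^[b+1] := by
    intro b
    have h : f^[b + (p+1)] = f^[b] ∘ f^[p+1] := Function.iterate_add f b (p+1)
    rw [hf] at h
    rw [show b+1+p = b+(p+1) by omega, h]
    exact (Function.iterate_succ f b).symm
  intro k
  induction k with
  | zero => intro a _; simp
  | succ k ih =>
    intro a ha
    obtain ⟨b, hb⟩ : ∃ b, a + k*p = b+1 := ⟨a + k*p - 1, by omega⟩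
    rw [show a + (k+1)*p = b+1+p by rw [Nat.succ_mul]; omega, step b, ← hb, ih a ha]

private lemma rel_iter {L : Type*} (le : L → L → Prop) (f : L → L)
    (hf : ∀ a b, le a b → le (f a) (f b)) :
    ∀ (k : ℕ) (a b : L), le a b → le (f^[k] a) (f^[k] b) := by
  intro k
  induction k with
  | zero => intro a b h; simpa using h
  | succ k ih =>
    intro a b h
    rw [Function.iterate_succ_apply, Function.iterate_succ_apply]
    exact ih _ _ (hf _ _ h)

private lemma rel_iter_le {L : Type*} (le : L → L → Prop)
    (hrefl : ∀ a, le a a)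
    (htrans : ∀ a b c, le a b → le b c → le a c) (s t : L → L)
    (ht : ∀ a b, le a b → le (t a) (t b)) (hst : ∀ x, le (s x) (t x)) :
    ∀ (k : ℕ) (x : L), le (s^[k] x) (t^[k] x) := by
  intro k
  induction k with
  | zero => intro x; simpa using hrefl x
  | succ k ih =>
    intro x
    rw [Function.iterate_succ_apply, Function.iterate_succ_apply]
    exact htrans _ _ _ (ih (s x)) (rel_iter le t ht k _ _ (hst x))

private theorem aux_main {L : Type*} (le : L → L → Prop)
    (hrefl : ∀ a, le a a)
    (htrans : ∀ a b c, le a b → le b c → le a c)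
    (hanti : ∀ a b, le a b → le b a → a = b)
    (μ ν : ℕ) (hμ : 1 ≤ μ) (hν : 1 ≤ ν)
    (s t : L → L)
    (hs : ∀ a b, le a b → le (s a) (s b)) (ht : ∀ a b, le a b → le (t a) (t b))
    (hst : ∀ x, le (s x) (t x))
    (hsm : s^[μ+1] = s) (htn : t^[ν+1] = t)
    (r r' : ℕ) (W W' : L → L)
    (hWs : ∀ x, le (s^[r] x) (W x)) (hWt : ∀ x, le (W x) (t^[r] x))
    (hW's : ∀ x, le (s^[r'] x) (W' x)) (hW't : ∀ x, le (W' x) (t^[r'] x))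
    (x : L) : s (W (t (W' (s x)))) = s (t^[r+r'+1] (s x)) := by
  have hμν : 1 ≤ μ * ν := Nat.one_le_iff_ne_zero.mpr (by positivity)
  have pers : ∀ a, 1 ≤ a → s^[a + μ*ν] = s^[a] := by
    intro a ha
    rw [show a + μ*ν = a + ν*μ by ring]
    exact iter_per hsm ν a ha
  have pert : ∀ a, 1 ≤ a → t^[a + μ*ν] = t^[a] := fun a ha => iter_per htn μ a ha
  have two_iter : ∀ (f : L → L) (z : L), f^[2] z = f (f z) := by
    intro f z
    simp [Function.iterate_succ_apply']
  have siter := rel_iter le s hs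
  have titer := rel_iter le t ht
  have stle := rel_iter_le le hrefl htrans s t ht hst
  -- Key lemma E : s (t^[B+1] (s y)) = s (s (t^[B] (s y)))
  have E : ∀ B, 1 ≤ B → ∀ y, s (t^[B+1] (s y)) = s (s (t^[B] (s y))) := by
    intro B hB y
    apply hanti
    · -- hard direction
      have h0 : s (t^[B+1] (s y)) = s^[1 + μ*ν] (t^[B+1] (s y)) := by
        rw [pers 1 le_rfl, Function.iterate_one]
      have h1 : s^[1 + μ*ν] (t^[B+1] (s y))
          = s (s (s^[μ*ν - 1] (t^[B+1] (s y)))) := by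
        rw [show 1 + μ*ν = 2 + (μ*ν - 1) by omega, Function.iterate_add_apply, two_iter]
      have h2 := stle (μ*ν - 1) (t^[B+1] (s y))
      have h3 : t^[μ*ν - 1] (t^[B+1] (s y)) = t^[B] (s y) := by
        rw [← Function.iterate_add_apply, show (μ*ν - 1) + (B+1) = B + μ*ν by omega,
          pert B hB]
      rw [h0, h1, ← h3]
      exact hs _ _ (hs _ _ h2)
    · -- easy direction
      rw [Function.iterate_succ_apply' t B (s y)]
      exact hs _ _ (hst _)
  -- Mirror key lemma E' : s (t^[B+1] (s y)) = s (t^[B] (s (s y)))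
  have E' : ∀ B, 1 ≤ B → ∀ y, s (t^[B+1] (s y)) = s (t^[B] (s (s y))) := by
    intro B hB y
    apply hanti
    · have h0 : s y = s^[μ*ν - 1] (s (s y)) := by
        have h := Function.iterate_add_apply s (μ*ν - 1) 2 y
        rw [show μ*ν - 1 + 2 = 1 + μ*ν by omega, pers 1 le_rfl, Function.iterate_one,
          two_iter] at h
        exact h
      have e1 : s (t^[B+1] (s y)) = s (t^[B+1] (s^[μ*ν - 1] (s (s y)))) := by
        rw [← h0]
      have h1 := titer (B+1) _ _ (stle (μ*ν - 1) (s (s y)))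
      have h2 : t^[B+1] (t^[μ*ν - 1] (s (s y))) = t^[B] (s (s y)) := by
        rw [← Function.iterate_add_apply, show (B+1) + (μ*ν - 1) = B + μ*ν by omega,
          pert B hB]
      rw [e1, ← h2]
      exact hs _ _ h1
    · have h := titer B _ _ (hst (s y))
      rw [← Function.iterate_succ_apply t B (s y)] at h
      exact hs _ _ h
  -- Lemma D : s^[A+1] (t^[B] (s y)) = s (t^[A+B] (s y))
  have D : ∀ A B, 1 ≤ B → ∀ y, s^[A+1] (t^[B] (s y)) = s (t^[A+B] (s y)) := by
    intro A
    induction A with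
    | zero => intro B hB y; simp
    | succ A ih =>
      intro B hB y
      have h1 : s^[A+1+1] (t^[B] (s y)) = s^[A] (s (s (t^[B] (s y)))) := by
        rw [show A+1+1 = A+2 by omega, Function.iterate_add_apply, two_iter]
      rw [h1, ← E B hB y, ← Function.iterate_succ_apply s A (t^[B+1] (s y)),
        ih (B+1) (by omega) y, show A + (B+1) = A+1+B by omega]
  -- Lemma D' : s (t^[B] (s^[C+1] y)) = s (t^[B+C] (s y))
  have D' : ∀ C B, 1 ≤ B → ∀ y, s (t^[B] (s^[C+1] y)) = s (t^[B+C] (s y)) := by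
    intro C
    induction C with
    | zero => intro B hB y; simp
    | succ C ih =>
      intro B hB y
      have h1 : s^[C+1+1] y = s (s (s^[C] y)) := by
        rw [show C+1+1 = 2+C by omega, Function.iterate_add_apply, two_iter]
      rw [h1, ← E' B hB (s^[C] y), ← Function.iterate_succ_apply' s C y,
        ih (B+1) (by omega) y, show B+1+C = B+(C+1) by omega]
  -- star : s^[r+1] (t (s^[r'+1] x)) = s (t^[r+r'+1] (s x))
  have star : s^[r+1] (t (s^[r'+1] x)) = s (t^[r+r'+1] (s x)) := by
    have d1 : s (t (s^[r'+1] x)) = s (t^[1+r'] (s x)) := by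
      have h := D' r' 1 le_rfl x
      rwa [Function.iterate_one] at h
    have h2 : s^[r+1] (t (s^[r'+1] x)) = s^[r] (s (t (s^[r'+1] x))) :=
      Function.iterate_succ_apply s r _
    rw [h2, d1, ← Function.iterate_succ_apply s r (t^[1+r'] (s x)),
      D r (1+r') (by omega) x, show r + (1+r') = r+r'+1 by omega]
  -- upper bound
  have upper : le (s (W (t (W' (s x))))) (s (t^[r+r'+1] (s x))) := by
    have u1 : le (W' (s x)) (t^[r'] (s x)) := hW't _
    have u2 : le (t (W' (s x))) (t^[r'+1] (s x)) := by
      have h := ht _ _ u1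
      rwa [← Function.iterate_succ_apply' t r' (s x)] at h
    have u3 : le (W (t (W' (s x)))) (t^[r+r'+1] (s x)) := by
      have h := titer r _ _ u2
      rw [← Function.iterate_add_apply t r (r'+1) (s x),
        show r + (r'+1) = r+r'+1 by omega] at h
      exact htrans _ _ _ (hWt _) h
    exact hs _ _ u3
  -- lower bound
  have lower : le (s (t^[r+r'+1] (s x))) (s (W (t (W' (s x))))) := by
    rw [← star]
    have l1 : le (s^[r'+1] x) (W' (s x)) := by
      have h := hW's (s x)
      rwa [← Function.iterate_succ_apply s r' x] at h
    have l2 := siter (r+1) _ _ (ht _ _ l1)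
    have l3 : s^[r+1] (t (W' (s x))) = s (s^[r] (t (W' (s x)))) :=
      Function.iterate_succ_apply' s r _
    refine htrans _ _ _ l2 ?_
    rw [l3]
    exact hs _ _ (hWs _)
  exact hanti _ _ upper lower

private lemma wordComp_ge {L : Type*} [PartialOrder L] {s t : L → L}
    (hs : Monotone s) (hst : ∀ x, s x ≤ t x) :
    ∀ (w : List Bool) (x : L), s^[w.length] x ≤ wordComp s t w x := by
  intro w
  induction w with
  | nil => intro x; simp [wordComp]
  | cons b w ih =>
    intro x
    have h1 : s^[(b :: w).length] x = s (s^[w.length] x) := by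
      rw [List.length_cons, Function.iterate_succ_apply']
    rw [h1]
    have h2 : s (s^[w.length] x) ≤ s (wordComp s t w x) := hs (ih x)
    refine h2.trans ?_
    show s (wordComp s t w x) ≤ (if b then t else s) (wordComp s t w x)
    cases b with
    | false => simp
    | true => simpa using hst (wordComp s t w x)

private lemma wordComp_le {L : Type*} [PartialOrder L] {s t : L → L}
    (ht : Monotone t) (hst : ∀ x, s x ≤ t x) :
    ∀ (w : List Bool) (x : L), wordComp s t w x ≤ t^[w.length] x := by
  intro w
  induction w with
  | nil => intro x; simp [wordComp]
  | cons b w ih =>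
    intro x
    have h1 : wordComp s t (b :: w) x = (if b then t else s) (wordComp s t w x) := rfl
    rw [h1, List.length_cons, Function.iterate_succ_apply']
    have h2 : (if b then t else s) (wordComp s t w x) ≤ t (wordComp s t w x) := by
      cases b with
      | false => simpa using hst (wordComp s t w x)
      | true => simp
    exact h2.trans (ht (ih x))

end AuxLemmas

/-- Lemma: for all words `w, w'` of lengths `r, r'`,
`s ∘ ⟨w⟩ ∘ t ∘ ⟨w'⟩ ∘ s = s ∘ t^[r+r'+1] ∘ s` and
`t ∘ ⟨w⟩ ∘ s ∘ ⟨w'⟩ ∘ t = t ∘ s^[r+r'+1] ∘ t`. -/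
theorem swtws_eq {L : Type*} [PartialOrder L] (m n : ℕ)
    (hm : 2 ≤ m) (hmn : m ≤ n)
    (s t : L → L) (hs : Monotone s) (ht : Monotone t) (hst : ∀ x, s x ≤ t x)
    (hsm : s^[m] = s) (htn : t^[n] = t) :
    ∀ w w' : List Bool,
      s ∘ wordComp s t w ∘ t ∘ wordComp s t w' ∘ s =
        s ∘ t^[w.length + w'.length + 1] ∘ s ∧
      t ∘ wordComp s t w ∘ s ∘ wordComp s t w' ∘ t =
        t ∘ s^[w.length + w'.length + 1] ∘ t := by
  intro w w'
  have hμ : 1 ≤ m - 1 := by omega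
  have hν : 1 ≤ n - 1 := by omega
  have hsm' : s^[(m-1)+1] = s := by rw [show m-1+1 = m by omega]; exact hsm
  have htn' : t^[(n-1)+1] = t := by rw [show n-1+1 = n by omega]; exact htn
  constructor
  · funext x
    simp only [Function.comp_apply]
    exact aux_main (fun a b => a ≤ b) (fun a => le_refl a) (fun _ _ _ h h' => le_trans h h')
      (fun _ _ h h' => le_antisymm h h') (m-1) (n-1) hμ hν s t
      (fun _ _ h => hs h) (fun _ _ h => ht h) hst hsm' htn' w.length w'.length
      (wordComp s t w) (wordComp s t w')
      (wordComp_ge hs hst w) (wordComp_le ht hst w)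
      (wordComp_ge hs hst w') (wordComp_le ht hst w') x
  · funext x
    simp only [Function.comp_apply]
    exact aux_main (fun a b => b ≤ a) (fun a => le_refl a) (fun _ _ _ h h' => le_trans h' h)
      (fun _ _ h h' => le_antisymm h' h) (n-1) (m-1) hν hμ t s
      (fun _ _ h => ht h) (fun _ _ h => hs h) (fun y => hst y) htn' hsm'
      w.length w'.length
      (wordComp s t w) (wordComp s t w')
      (wordComp_le ht hst w) (wordComp_ge hs hst w)
      (wordComp_le ht hst w') (wordComp_ge hs hst w') x
end

section
/- Fix integers 2 ≤ m ≤ n and let d = gcd(m−1, n−1). Let (L, ≤) be a partial order with monotone s, t : L → L satisfying s x ≤ t x for all x, s^[m] = s, and t^[n] = t. Then for every nonempty word w over {s, t}, the composite ⟨w⟩ equals one of the following functions: s^[j] for some 1 ≤ j ≤ m−1; t^[j] for some 1 ≤ j ≤ n−1; or one of s^[j] ∘ t, s^[j] ∘ t ∘ s, t^[j] ∘ s, t^[j] ∘ s ∘ t for some 1 ≤ j ≤ d. In particular, s and t generate a finite semigroup under composition. -/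
set_option linter.unusedSectionVars false
set_option linter.unusedVariables false
set_option linter.unusedTactic false

section Aux
variable {L : Type*} [PartialOrder L]

private lemma reduce_mod' {α : Sort*} (F : ℕ → α) {p : ℕ} (hp : 1 ≤ p)
    (hper : ∀ j, 1 ≤ j → F (j + p) = F j) :
    ∀ j, 1 ≤ j → ∃ j', 1 ≤ j' ∧ j' ≤ p ∧ F j = F j' := by
  intro j
  induction j using Nat.strong_induction_on with
  | _ j ih =>
    intro hj
    by_cases h : j ≤ p
    · exact ⟨j, hj, h, rfl⟩
    · obtain ⟨k, rfl⟩ : ∃ k, j = k + p := ⟨j - p, by omega⟩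
      obtain ⟨j', h1, h2, h3⟩ := ih k (by omega) (by omega)
      exact ⟨j', h1, h2, by rw [hper k (by omega), h3]⟩

private lemma iter_per' {s : L → L} {m : ℕ} (hm : 1 ≤ m) (hsm : s^[m] = s)
    (j : ℕ) (hj : 1 ≤ j) : s^[j + (m-1)] = s^[j] := by
  obtain ⟨k, rfl⟩ : ∃ k, j = k + 1 := ⟨j - 1, by omega⟩
  have h1 : k + 1 + (m - 1) = k + m := by omega
  rw [h1, Function.iterate_add, hsm, ← Function.iterate_succ]

private lemma iter_per_mul' {s : L → L} {m : ℕ} (hm : 1 ≤ m) (hsm : s^[m] = s)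
    (j a : ℕ) (hj : 1 ≤ j) : s^[j + a*(m-1)] = s^[j] := by
  induction a with
  | zero => simp
  | succ a ih =>
    have h : j + (a+1)*(m-1) = (j + a*(m-1)) + (m-1) := by ring
    rw [h, iter_per' hm hsm _ (by omega), ih]

private lemma chainG' {s t : L → L} (hs : Monotone s) (ht : Monotone t)
    (hst : ∀ x, s x ≤ t x) (a : ℕ) : ∀ c b, ∀ x : L,
    s^[a+c] (t^[b] x) ≤ s^[a] (t^[b+c] x) := by
  intro c
  induction c with
  | zero => intro b x; simp
  | succ c ih =>
    intro b x
    have e1 : a + (c+1) = (a+c) + 1 := by omega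
    calc s^[a+(c+1)] (t^[b] x) = s^[a+c] (s (t^[b] x)) := by
          rw [e1, Function.iterate_succ_apply]
      _ ≤ s^[a+c] (t (t^[b] x)) := (hs.iterate (a+c)) (hst _)
      _ = s^[a+c] (t^[b+1] x) := by rw [Function.iterate_succ_apply']
      _ ≤ s^[a] (t^[(b+1)+c] x) := ih (b+1) x
      _ = s^[a] (t^[b+(c+1)] x) := by rw [show (b+1)+c = b+(c+1) by omega]

private lemma chainH' {s t : L → L} (hs : Monotone s) (ht : Monotone t)
    (hst : ∀ x, s x ≤ t x) (a : ℕ) : ∀ c b, ∀ x : L,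
    t^[a] (s^[b+c] x) ≤ t^[a+c] (s^[b] x) := by
  intro c
  induction c with
  | zero => intro b x; simp
  | succ c ih =>
    intro b x
    calc t^[a] (s^[b+(c+1)] x) = t^[a] (s^[(b+1)+c] x) := by
          rw [show b+(c+1) = (b+1)+c by omega]
      _ ≤ t^[a+c] (s^[b+1] x) := ih (b+1) x
      _ = t^[a+c] (s (s^[b] x)) := by rw [Function.iterate_succ_apply']
      _ ≤ t^[a+c] (t (s^[b] x)) := (ht.iterate (a+c)) (hst _)
      _ = t^[a+(c+1)] (s^[b] x) := by
          rw [show a+(c+1) = (a+c)+1 by omega, Function.iterate_succ_apply]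

private lemma keyG' {s t : L → L} {m n : ℕ} (hm : 2 ≤ m) (hn : 2 ≤ n)
    (hs : Monotone s) (ht : Monotone t) (hst : ∀ x, s x ≤ t x)
    (hsm : s^[m] = s) (htn : t^[n] = t) :
    ∀ j, 1 ≤ j → ∀ x : L, s (t^[j] x) = s^[j] (t x) := by
  intro j hj x
  obtain ⟨N, rfl⟩ : ∃ N, j = N + 1 := ⟨j - 1, by omega⟩
  have hP1 : 1 ≤ (m-1)*(n-1) := by
    have h1 : 1 ≤ m-1 := by omega
    have h2 : 1 ≤ n-1 := by omega
    exact Nat.one_le_iff_ne_zero.mpr (by positivity)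
  have hmul : (N*(n-1))*(m-1) = N*((m-1)*(n-1)) := by ring
  have hmul2 : (N*(m-1))*(n-1) = N*((m-1)*(n-1)) := by ring
  have hge : N ≤ N*((m-1)*(n-1)) := Nat.le_mul_of_pos_right _ hP1
  set P := (m-1)*(n-1) with hP
  apply le_antisymm
  · calc s (t^[N+1] x) = s^[1] (t^[N+1] x) := by rw [Function.iterate_one]
      _ = s^[1 + (N*(n-1))*(m-1)] (t^[N+1] x) := by
          rw [iter_per_mul' (by omega) hsm 1 (N*(n-1)) (le_refl 1)]
      _ = s^[(N+1) + (N*P-N)] (t^[N+1] x) := by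
          rw [show (N+1)+(N*P-N) = 1 + (N*(n-1))*(m-1) by omega]
      _ ≤ s^[N+1] (t^[(N+1) + (N*P-N)] x) := chainG' hs ht hst (N+1) (N*P-N) (N+1) x
      _ = s^[N+1] (t^[1 + (N*(m-1))*(n-1)] x) := by
          rw [show (N+1)+(N*P-N) = 1 + (N*(m-1))*(n-1) by omega]
      _ = s^[N+1] (t^[1] x) := by
          rw [iter_per_mul' (by omega) htn 1 (N*(m-1)) (le_refl 1)]
      _ = s^[N+1] (t x) := by rw [Function.iterate_one]
  · have h := chainG' hs ht hst 1 N 1 x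
    calc s^[N+1] (t x) = s^[1+N] (t^[1] x) := by
          rw [show 1+N = N+1 by omega, Function.iterate_one]
      _ ≤ s^[1] (t^[1+N] x) := h
      _ = s (t^[N+1] x) := by rw [show 1+N = N+1 by omega, Function.iterate_one]

private lemma keyH' {s t : L → L} {m n : ℕ} (hm : 2 ≤ m) (hn : 2 ≤ n)
    (hs : Monotone s) (ht : Monotone t) (hst : ∀ x, s x ≤ t x)
    (hsm : s^[m] = s) (htn : t^[n] = t) :
    ∀ j, 1 ≤ j → ∀ x : L, t (s^[j] x) = t^[j] (s x) := by
  intro j hj x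
  obtain ⟨N, rfl⟩ : ∃ N, j = N + 1 := ⟨j - 1, by omega⟩
  have hP1 : 1 ≤ (m-1)*(n-1) := by
    have h1 : 1 ≤ m-1 := by omega
    have h2 : 1 ≤ n-1 := by omega
    exact Nat.one_le_iff_ne_zero.mpr (by positivity)
  have hmul : (N*(n-1))*(m-1) = N*((m-1)*(n-1)) := by ring
  have hmul2 : (N*(m-1))*(n-1) = N*((m-1)*(n-1)) := by ring
  have hge : N ≤ N*((m-1)*(n-1)) := Nat.le_mul_of_pos_right _ hP1
  set P := (m-1)*(n-1) with hP
  apply le_antisymm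
  · have h := chainH' hs ht hst 1 N 1 x
    calc t (s^[N+1] x) = t^[1] (s^[1+N] x) := by
          rw [show 1+N = N+1 by omega, Function.iterate_one]
      _ ≤ t^[1+N] (s^[1] x) := h
      _ = t^[N+1] (s x) := by rw [show 1+N = N+1 by omega, Function.iterate_one]
  · calc t^[N+1] (s x) = t^[N+1] (s^[1] x) := by rw [Function.iterate_one]
      _ = t^[N+1] (s^[1 + (N*(n-1))*(m-1)] x) := by
          rw [iter_per_mul' (by omega) hsm 1 (N*(n-1)) (le_refl 1)]
      _ = t^[N+1] (s^[(N+1) + (N*P-N)] x) := by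
          rw [show (N+1)+(N*P-N) = 1 + (N*(n-1))*(m-1) by omega]
      _ ≤ t^[(N+1)+(N*P-N)] (s^[N+1] x) := chainH' hs ht hst (N+1) (N*P-N) (N+1) x
      _ = t^[1 + (N*(m-1))*(n-1)] (s^[N+1] x) := by
          rw [show (N+1)+(N*P-N) = 1 + (N*(m-1))*(n-1) by omega]
      _ = t^[1] (s^[N+1] x) := by
          rw [iter_per_mul' (by omega) htn 1 (N*(m-1)) (le_refl 1)]
      _ = t (s^[N+1] x) := by rw [Function.iterate_one]

private lemma bez' (m1 n1 : ℕ) (hm1 : 1 ≤ m1) (hn1 : 1 ≤ n1) :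
    ∃ u v : ℕ, Nat.gcd m1 n1 + u * m1 = v * n1 := by
  have h := Nat.gcd_eq_gcd_ab m1 n1
  set x := Nat.gcdA m1 n1 with hx
  set y := Nat.gcdB m1 n1 with hy
  set K : ℤ := x.natAbs + y.natAbs + 1 with hK
  have hxK : x ≤ K := by
    have := Int.le_natAbs (a := x); omega
  have hyK : -y ≤ K := by
    have h1 : -y ≤ (y.natAbs : ℤ) := by omega
    omega
  have hn1' : (1:ℤ) ≤ (n1:ℤ) := by exact_mod_cast hn1
  have hm1' : (1:ℤ) ≤ (m1:ℤ) := by exact_mod_cast hm1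
  have hK0 : 0 ≤ K := by positivity
  have h1 : (0:ℤ) ≤ K * n1 - x := by nlinarith
  have h2 : (0:ℤ) ≤ y + K * m1 := by nlinarith
  refine ⟨(K * n1 - x).toNat, (y + K * m1).toNat, ?_⟩
  have := Int.toNat_of_nonneg h1
  have := Int.toNat_of_nonneg h2
  zify
  rw [Int.toNat_of_nonneg h1, Int.toNat_of_nonneg h2]
  push_cast at h
  linear_combination h

end Aux

/-- Every nonempty word in `s, t` reduces to one of the normal forms
`s^[j]` (1 ≤ j ≤ m-1), `t^[j]` (1 ≤ j ≤ n-1), or `s^[j]∘t`, `s^[j]∘t∘s`,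
`t^[j]∘s`, `t^[j]∘s∘t` (1 ≤ j ≤ d, d = gcd(m-1, n-1)); in particular the
semigroup generated by `s` and `t` under composition is finite. -/
theorem word_normal_form {L : Type*} [PartialOrder L] (m n : ℕ)
    (hm : 2 ≤ m) (hmn : m ≤ n)
    (s t : L → L) (hs : Monotone s) (ht : Monotone t) (hst : ∀ x, s x ≤ t x)
    (hsm : s^[m] = s) (htn : t^[n] = t) :
    (∀ w : List Bool, w ≠ [] →
      (∃ j, 1 ≤ j ∧ j ≤ m - 1 ∧ wordComp s t w = s^[j]) ∨
      (∃ j, 1 ≤ j ∧ j ≤ n - 1 ∧ wordComp s t w = t^[j]) ∨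
      (∃ j, 1 ≤ j ∧ j ≤ Nat.gcd (m - 1) (n - 1) ∧
        (wordComp s t w = s^[j] ∘ t ∨ wordComp s t w = s^[j] ∘ t ∘ s ∨
         wordComp s t w = t^[j] ∘ s ∨ wordComp s t w = t^[j] ∘ s ∘ t))) ∧
    {f : L → L | ∃ w : List Bool, w ≠ [] ∧ wordComp s t w = f}.Finite := by
  have hn : 2 ≤ n := le_trans hm hmn
  set D := Nat.gcd (m-1) (n-1) with hD
  have hD1 : 1 ≤ D := Nat.gcd_pos_of_pos_left _ (by omega)
  have keyG := keyG' hm hn hs ht hst hsm htn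
  have keyH := keyH' hm hn hs ht hst hsm htn
  -- s t s t = s^[3] ∘ t  pointwise
  have F3 : ∀ x, s (t (s (t x))) = s^[3] (t x) := by
    intro x
    have e3 : ∀ (f : L → L) (y : L), f^[3] y = f (f (f y)) := by
      intro f y
      rw [show (3:ℕ) = 1+1+1 from rfl, Function.iterate_add_apply,
        Function.iterate_add_apply, Function.iterate_one]
    have h3 : s (t^[3] x) = s^[3] (t x) := keyG 3 (by omega) x
    apply le_antisymm
    · rw [← h3, e3 t x]
      exact hs (ht (hst (t x)))
    · rw [e3 s (t x)]
      exact hs (hst (s (t x)))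
  have F4 : ∀ x, t (s (t (s x))) = t^[3] (s x) := by
    intro x
    have e3 : ∀ (f : L → L) (y : L), f^[3] y = f (f (f y)) := by
      intro f y
      rw [show (3:ℕ) = 1+1+1 from rfl, Function.iterate_add_apply,
        Function.iterate_add_apply, Function.iterate_one]
    have h3 : t (s^[3] x) = t^[3] (s x) := keyH 3 (by omega) x
    apply le_antisymm
    · rw [e3 t (s x)]
      exact ht (hst (t (s x)))
    · rw [← h3, e3 s x]
      exact ht (hs (hst (s x)))
  -- periodicity mod D
  have perST : ∀ j, 1 ≤ j → ∀ x, s^[j + D] (t x) = s^[j] (t x) := by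
    obtain ⟨u, v, huv⟩ := bez' (m-1) (n-1) (by omega) (by omega)
    intro j hj x
    calc s^[j + D] (t x) = s^[j + D + u*(m-1)] (t x) := by
          rw [iter_per_mul' (by omega) hsm (j+D) u (by omega)]
      _ = s^[j + v*(n-1)] (t x) := by rw [show j + D + u*(m-1) = j + v*(n-1) by omega]
      _ = s (t^[j + v*(n-1)] x) := (keyG (j + v*(n-1)) (by omega) x).symm
      _ = s (t^[j] x) := by rw [iter_per_mul' (by omega) htn j v hj]
      _ = s^[j] (t x) := keyG j hj x
  have perTS : ∀ j, 1 ≤ j → ∀ x, t^[j + D] (s x) = t^[j] (s x) := by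
    obtain ⟨u, v, huv⟩ := bez' (n-1) (m-1) (by omega) (by omega)
    have hcomm : Nat.gcd (n-1) (m-1) = D := Nat.gcd_comm _ _
    intro j hj x
    calc t^[j + D] (s x) = t^[j + D + u*(n-1)] (s x) := by
          rw [iter_per_mul' (by omega) htn (j+D) u (by omega)]
      _ = t^[j + v*(m-1)] (s x) := by rw [show j + D + u*(n-1) = j + v*(m-1) by omega]
      _ = t (s^[j + v*(m-1)] x) := (keyH (j + v*(m-1)) (by omega) x).symm
      _ = t (s^[j] x) := by rw [iter_per_mul' (by omega) hsm j v hj]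
      _ = t^[j] (s x) := keyH j hj x
  -- reductions
  have redS : ∀ j, 1 ≤ j → ∃ j', 1 ≤ j' ∧ j' ≤ m-1 ∧ (s^[j] : L → L) = s^[j'] :=
    reduce_mod' (fun j => s^[j]) (by omega)
      (fun j hj => iter_per' (by omega) hsm j hj)
  have redT : ∀ j, 1 ≤ j → ∃ j', 1 ≤ j' ∧ j' ≤ n-1 ∧ (t^[j] : L → L) = t^[j'] :=
    reduce_mod' (fun j => t^[j]) (by omega)
      (fun j hj => iter_per' (by omega) htn j hj)
  have redST : ∀ j, 1 ≤ j → ∃ j', 1 ≤ j' ∧ j' ≤ D ∧ (s^[j] ∘ t : L → L) = s^[j'] ∘ t :=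
    reduce_mod' (fun j => s^[j] ∘ t) hD1
      (fun j hj => funext fun x => perST j hj x)
  have redTS : ∀ j, 1 ≤ j → ∃ j', 1 ≤ j' ∧ j' ≤ D ∧ (t^[j] ∘ s : L → L) = t^[j'] ∘ s :=
    reduce_mod' (fun j => t^[j] ∘ s) hD1
      (fun j hj => funext fun x => perTS j hj x)
  have redSTS : ∀ j, 1 ≤ j → ∃ j', 1 ≤ j' ∧ j' ≤ D ∧
      (s^[j] ∘ t ∘ s : L → L) = s^[j'] ∘ t ∘ s :=
    reduce_mod' (fun j => s^[j] ∘ t ∘ s) hD1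
      (fun j hj => funext fun x => perST j hj (s x))
  have redTST : ∀ j, 1 ≤ j → ∃ j', 1 ≤ j' ∧ j' ≤ D ∧
      (t^[j] ∘ s ∘ t : L → L) = t^[j'] ∘ s ∘ t :=
    reduce_mod' (fun j => t^[j] ∘ s ∘ t) hD1
      (fun j hj => funext fun x => perTS j hj (t x))
  have part1 : ∀ w : List Bool, w ≠ [] →
      (∃ j, 1 ≤ j ∧ j ≤ m - 1 ∧ wordComp s t w = s^[j]) ∨
      (∃ j, 1 ≤ j ∧ j ≤ n - 1 ∧ wordComp s t w = t^[j]) ∨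
      (∃ j, 1 ≤ j ∧ j ≤ D ∧
        (wordComp s t w = s^[j] ∘ t ∨ wordComp s t w = s^[j] ∘ t ∘ s ∨
         wordComp s t w = t^[j] ∘ s ∨ wordComp s t w = t^[j] ∘ s ∘ t)) := by
    intro w hw
    induction w with
    | nil => exact absurd rfl hw
    | cons b w ih =>
      by_cases hw' : w = []
      · subst hw'
        cases b
        · exact Or.inl ⟨1, le_refl 1, by omega, by
            funext x; simp [wordComp]⟩
        · exact Or.inr (Or.inl ⟨1, le_refl 1, by omega, by
            funext x; simp [wordComp]⟩)
      · have hcf : wordComp s t (false :: w) = s ∘ wordComp s t w := by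
          simp [wordComp]
        have hct : wordComp s t (true :: w) = t ∘ wordComp s t w := by
          simp [wordComp]
        rcases ih hw' with ⟨j, hj1, hj2, hW⟩ | ⟨j, hj1, hj2, hW⟩ | ⟨j, hj1, hj2, hcase⟩
        · -- W = s^[j]
          cases b
          · obtain ⟨j', h1, h2, h3⟩ := redS (j+1) (by omega)
            refine Or.inl ⟨j', h1, h2, ?_⟩
            rw [hcf, hW, ← Function.iterate_succ', h3]
          · obtain ⟨j', h1, h2, h3⟩ := redTS j hj1
            refine Or.inr (Or.inr ⟨j', h1, h2, Or.inr (Or.inr (Or.inl ?_))⟩)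
            rw [hct, hW, show (t ∘ s^[j] : L → L) = t^[j] ∘ s from
              funext fun x => keyH j hj1 x, h3]
        · -- W = t^[j]
          cases b
          · obtain ⟨j', h1, h2, h3⟩ := redST j hj1
            refine Or.inr (Or.inr ⟨j', h1, h2, Or.inl ?_⟩)
            rw [hcf, hW, show (s ∘ t^[j] : L → L) = s^[j] ∘ t from
              funext fun x => keyG j hj1 x, h3]
          · obtain ⟨j', h1, h2, h3⟩ := redT (j+1) (by omega)
            refine Or.inr (Or.inl ⟨j', h1, h2, ?_⟩)
            rw [hct, hW, ← Function.iterate_succ', h3]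
        · rcases hcase with hW | hW | hW | hW
          · -- W = s^[j] ∘ t
            cases b
            · obtain ⟨j', h1, h2, h3⟩ := redST (j+1) (by omega)
              refine Or.inr (Or.inr ⟨j', h1, h2, Or.inl ?_⟩)
              rw [hcf, hW, show (s ∘ (s^[j] ∘ t) : L → L) = s^[j+1] ∘ t from
                funext fun x => (Function.iterate_succ_apply' s j (t x)).symm, h3]
            · refine Or.inr (Or.inr ⟨j, hj1, hj2, Or.inr (Or.inr (Or.inr ?_))⟩)
              rw [hct, hW]
              exact funext fun x => keyH j hj1 (t x)
          · -- W = s^[j] ∘ t ∘ s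
            cases b
            · obtain ⟨j', h1, h2, h3⟩ := redSTS (j+1) (by omega)
              refine Or.inr (Or.inr ⟨j', h1, h2, Or.inr (Or.inl ?_)⟩)
              rw [hcf, hW, show (s ∘ (s^[j] ∘ t ∘ s) : L → L) = s^[j+1] ∘ t ∘ s from
                funext fun x => (Function.iterate_succ_apply' s j (t (s x))).symm, h3]
            · obtain ⟨j', h1, h2, h3⟩ := redTS (j+2) (by omega)
              refine Or.inr (Or.inr ⟨j', h1, h2, Or.inr (Or.inr (Or.inl ?_))⟩)
              rw [hct, hW, ← h3]
              funext x
              obtain ⟨k, rfl⟩ : ∃ k, j = k + 1 := ⟨j - 1, by omega⟩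
              show t (s^[k+1] (t (s x))) = t^[k+1+2] (s x)
              rw [keyH (k+1) (by omega) (t (s x)), Function.iterate_succ_apply,
                F4 x, ← Function.iterate_add_apply]
          · -- W = t^[j] ∘ s
            cases b
            · refine Or.inr (Or.inr ⟨j, hj1, hj2, Or.inr (Or.inl ?_)⟩)
              rw [hcf, hW]
              exact funext fun x => keyG j hj1 (s x)
            · obtain ⟨j', h1, h2, h3⟩ := redTS (j+1) (by omega)
              refine Or.inr (Or.inr ⟨j', h1, h2, Or.inr (Or.inr (Or.inl ?_))⟩)
              rw [hct, hW, show (t ∘ (t^[j] ∘ s) : L → L) = t^[j+1] ∘ s from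
                funext fun x => (Function.iterate_succ_apply' t j (s x)).symm, h3]
          · -- W = t^[j] ∘ s ∘ t
            cases b
            · obtain ⟨j', h1, h2, h3⟩ := redST (j+2) (by omega)
              refine Or.inr (Or.inr ⟨j', h1, h2, Or.inl ?_⟩)
              rw [hcf, hW, ← h3]
              funext x
              obtain ⟨k, rfl⟩ : ∃ k, j = k + 1 := ⟨j - 1, by omega⟩
              show s (t^[k+1] (s (t x))) = s^[k+1+2] (t x)
              rw [keyG (k+1) (by omega) (s (t x)), Function.iterate_succ_apply,
                F3 x, ← Function.iterate_add_apply]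
            · obtain ⟨j', h1, h2, h3⟩ := redTST (j+1) (by omega)
              refine Or.inr (Or.inr ⟨j', h1, h2, Or.inr (Or.inr (Or.inr ?_))⟩)
              rw [hct, hW, show (t ∘ (t^[j] ∘ s ∘ t) : L → L) = t^[j+1] ∘ s ∘ t from
                funext fun x => (Function.iterate_succ_apply' t j (s (t x))).symm, h3]
  refine ⟨part1, ?_⟩
  have hfin : (((((((fun j => s^[j]) '' Set.Icc 1 (m-1)) ∪
      ((fun j => t^[j]) '' Set.Icc 1 (n-1))) ∪
      ((fun j => s^[j] ∘ t) '' Set.Icc 1 D)) ∪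
      ((fun j => s^[j] ∘ t ∘ s) '' Set.Icc 1 D)) ∪
      ((fun j => t^[j] ∘ s) '' Set.Icc 1 D)) ∪
      ((fun j => (t^[j] ∘ s ∘ t : L → L)) '' Set.Icc 1 D)).Finite := by
    repeat' apply Set.Finite.union
    all_goals exact (Set.finite_Icc _ _).image _
  apply hfin.subset
  rintro f ⟨w, hw, rfl⟩
  simp only [Set.mem_union, Set.mem_image, Set.mem_Icc]
  rcases part1 w hw with ⟨j, h1, h2, h3⟩ | ⟨j, h1, h2, h3⟩ | ⟨j, h1, h2, h3 | h3 | h3 | h3⟩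
  · exact Or.inl (Or.inl (Or.inl (Or.inl (Or.inl ⟨j, ⟨h1, h2⟩, h3.symm⟩))))
  · exact Or.inl (Or.inl (Or.inl (Or.inl (Or.inr ⟨j, ⟨h1, h2⟩, h3.symm⟩))))
  · exact Or.inl (Or.inl (Or.inl (Or.inr ⟨j, ⟨h1, h2⟩, h3.symm⟩)))
  · exact Or.inl (Or.inl (Or.inr ⟨j, ⟨h1, h2⟩, h3.symm⟩))
  · exact Or.inl (Or.inr ⟨j, ⟨h1, h2⟩, h3.symm⟩)
  · exact Or.inr ⟨j, ⟨h1, h2⟩, h3.symm⟩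
end

section
/- For all integers m, n ≥ 2 the following four statements hold, where in each case the existential asserts the existence of a partial order L, monotone functions s, t : L → L with s x ≤ t x for all x, s^[m] = s, t^[n] = t, and a point x ∈ L: (i) there exist L, s, t, x such that for every k ≥ 1 and every word w over {s,t}, ¬(t^[k] x ≤ (t ∘ s ∘ ⟨w⟩) x); (ii) there exist L, s, t, x such that for every k ≥ 1 and every word w, ¬((s ∘ t ∘ ⟨w⟩) x ≤ s^[k] x); (iii) there exist L, s, t, x such that for all words w, w', ¬((t ∘ ⟨w⟩) x ≤ (s ∘ ⟨w'⟩) x); (iv) there exist L, s, t, x such that for all words w, w', ¬((⟨w⟩ ∘ t) x ≤ (⟨w'⟩ ∘ s) x). -/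
lemma iterate_of_idem {α : Type*} (f : α → α) (h : f ∘ f = f) :
    ∀ m : ℕ, 1 ≤ m → f^[m] = f := by
  intro m hm
  induction m with
  | zero => omega
  | succ k ih =>
    rcases Nat.eq_zero_or_pos k with hk | hk
    · subst hk; simp
    · rw [Function.iterate_succ, ih hk, h]

/-- Custom order on `Option (Bool × Bool)`: `none` is isolated, and the `some`
elements carry the product order. -/
def le4 : Option (Bool × Bool) → Option (Bool × Bool) → Prop
  | none, none => True
  | some a, some b => a ≤ b
  | _, _ => False

def inst4 : PartialOrder (Option (Bool × Bool)) where
  le := le4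
  lt a b := le4 a b ∧ ¬ le4 b a
  lt_iff_le_not_ge _ _ := Iff.rfl
  le_refl x := by cases x <;> simp [le4]
  le_trans x y z := by
    cases x <;> cases y <;> cases z <;> simp [le4] <;> exact le_trans
  le_antisymm x y := by
    cases x <;> cases y <;> simp [le4] <;> exact le_antisymm

def s4 : Option (Bool × Bool) → Option (Bool × Bool)
  | none => some (false, false)
  | some (a, _) => some (a, false)

def t4 : Option (Bool × Bool) → Option (Bool × Bool)
  | none => some (true, true)
  | some (a, _) => some (a, true)

lemma s4_mono : ∀ a b, le4 a b → le4 (s4 a) (s4 b) := by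
  rintro (_ | ⟨a1, a2⟩) (_ | ⟨b1, b2⟩) h
  · exact le_refl ((false, false) : Bool × Bool)
  · exact h.elim
  · exact h.elim
  · exact ⟨h.1, le_refl _⟩

lemma t4_mono : ∀ a b, le4 a b → le4 (t4 a) (t4 b) := by
  rintro (_ | ⟨a1, a2⟩) (_ | ⟨b1, b2⟩) h
  · exact le_refl ((true, true) : Bool × Bool)
  · exact h.elim
  · exact h.elim
  · exact ⟨h.1, le_refl _⟩

lemma s4_le_t4 : ∀ y, le4 (s4 y) (t4 y) := by
  rintro (_ | ⟨a, b⟩)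
  · exact (by decide : ((false, false) : Bool × Bool) ≤ (true, true))
  · exact ⟨le_refl _, Bool.false_le _⟩

lemma s4_idem : s4 ∘ s4 = s4 := by
  funext x; rcases x with _ | ⟨a, b⟩ <;> rfl

lemma t4_idem : t4 ∘ t4 = t4 := by
  funext x; rcases x with _ | ⟨a, b⟩ <;> rfl

lemma word4_fst (w : List Bool) (a b : Bool) :
    ∃ c, wordComp s4 t4 w (some (a, b)) = some (a, c) := by
  induction w with
  | nil => exact ⟨b, rfl⟩
  | cons hd tl ih =>
    obtain ⟨c, hc⟩ := ih
    cases hd <;> simp [wordComp, hc, s4, t4]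


/-- `s, t` form a Chittenden setup of type `(m, n)`. -/
def ChittendenSetup (m n : ℕ) (L : Type) [PartialOrder L] (s t : L → L) : Prop :=
  Monotone s ∧ Monotone t ∧ (∀ y, s y ≤ t y) ∧ s^[m] = s ∧ t^[n] = t

/-- Counterexample (i): a point `x` with `¬ t^[k] x ≤ (t ∘ s ∘ ⟨w⟩) x` for all
`k ≥ 1` and all words `w`. -/
def CounterI (m n : ℕ) (L : Type) [PartialOrder L] (s t : L → L) (x : L) : Prop :=
  ChittendenSetup m n L s t ∧
    ∀ k : ℕ, 1 ≤ k → ∀ w : List Bool, ¬ t^[k] x ≤ (t ∘ s ∘ wordComp s t w) x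

/-- Counterexample (ii): a point `x` with `¬ (s ∘ t ∘ ⟨w⟩) x ≤ s^[k] x` for all
`k ≥ 1` and all words `w`. -/
def CounterII (m n : ℕ) (L : Type) [PartialOrder L] (s t : L → L) (x : L) : Prop :=
  ChittendenSetup m n L s t ∧
    ∀ k : ℕ, 1 ≤ k → ∀ w : List Bool, ¬ (s ∘ t ∘ wordComp s t w) x ≤ s^[k] x

/-- Counterexample (iii): a point `x` with `¬ (t ∘ ⟨w⟩) x ≤ (s ∘ ⟨w'⟩) x` for
all words `w, w'`. -/
def CounterIII (m n : ℕ) (L : Type) [PartialOrder L] (s t : L → L) (x : L) : Prop :=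
  ChittendenSetup m n L s t ∧
    ∀ w w' : List Bool, ¬ (t ∘ wordComp s t w) x ≤ (s ∘ wordComp s t w') x

/-- Counterexample (iv): a point `x` with `¬ (⟨w⟩ ∘ t) x ≤ (⟨w'⟩ ∘ s) x` for
all words `w, w'`. -/
def CounterIV (m n : ℕ) (L : Type) [PartialOrder L] (s t : L → L) (x : L) : Prop :=
  ChittendenSetup m n L s t ∧
    ∀ w w' : List Bool, ¬ (wordComp s t w ∘ t) x ≤ (wordComp s t w' ∘ s) x

/-- For all `m, n ≥ 2`, the four families of non-inequalities in the Hasse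
diagram of `C(m,n)` are witnessed by suitable posets and points. -/
theorem counterexamples_exist (m n : ℕ) (hm : 2 ≤ m) (hn : 2 ≤ n) :
    (∃ (L : Type) (inst : PartialOrder L) (s t : L → L) (x : L),
      @CounterI m n L inst s t x) ∧
    (∃ (L : Type) (inst : PartialOrder L) (s t : L → L) (x : L),
      @CounterII m n L inst s t x) ∧
    (∃ (L : Type) (inst : PartialOrder L) (s t : L → L) (x : L),
      @CounterIII m n L inst s t x) ∧
    (∃ (L : Type) (inst : PartialOrder L) (s t : L → L) (x : L),
      @CounterIV m n L inst s t x) := by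
  have h1 : 1 ≤ m := by omega
  have h2 : 1 ≤ n := by omega
  refine ⟨?_, ?_, ?_, ?_⟩
  · -- (i): L = Bool, s = const false, t = id, x = true
    refine ⟨Bool, inferInstance, (fun _ => false), id, true,
      ⟨monotone_const, monotone_id, fun y => Bool.false_le y,
        iterate_of_idem _ rfl m h1, Function.iterate_id n⟩, ?_⟩
    intro k hk w
    simp [Function.iterate_id]
  · -- (ii): L = Bool, s = id, t = const true, x = false
    refine ⟨Bool, inferInstance, id, (fun _ => true), false,
      ⟨monotone_id, monotone_const, fun y => Bool.le_true y,
        Function.iterate_id m, iterate_of_idem _ rfl n h2⟩, ?_⟩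
    intro k hk w
    simp [Function.iterate_id]
  · -- (iii): L = Bool, s = const false, t = const true, x = false
    refine ⟨Bool, inferInstance, (fun _ => false), (fun _ => true), false,
      ⟨monotone_const, monotone_const, fun _ => Bool.false_le _,
        iterate_of_idem _ rfl m h1, iterate_of_idem _ rfl n h2⟩, ?_⟩
    intro w w'
    simp
  · -- (iv): L = Option (Bool × Bool) with the custom order
    refine ⟨Option (Bool × Bool), inst4, s4, t4, none,
      ⟨fun a b h => s4_mono a b h, fun a b h => t4_mono a b h, s4_le_t4,
        iterate_of_idem _ s4_idem m h1, iterate_of_idem _ t4_idem n h2⟩, ?_⟩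
    intro w w'
    obtain ⟨c, hc⟩ := word4_fst w true true
    obtain ⟨c', hc'⟩ := word4_fst w' false false
    intro h
    have h' : le4 (wordComp s4 t4 w (t4 none)) (wordComp s4 t4 w' (s4 none)) := h
    rw [show t4 none = some (true, true) from rfl,
        show s4 none = some (false, false) from rfl, hc, hc'] at h'
    exact (by decide : ¬ (true ≤ false)) h'.1
end

section
/- Fix integers 2 ≤ m ≤ n. (a) For all integers z₁ ≠ z₂ with 1 ≤ z₁, z₂ ≤ n−1, there exist a partial order L, monotone functions s, t : L → L with s x ≤ t x for all x, s^[m] = s, t^[n] = t, and a point x ∈ L such that ¬(t^[z₁] x ≤ t^[z₂] x). (b) Likewise, for all integers z₁ ≠ z₂ with 1 ≤ z₁, z₂ ≤ m−1, there exist such L, s, t and a point x with ¬(s^[z₁] x ≤ s^[z₂] x). -/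
/-- A setup together with a point separating `t^[z₁]` from `t^[z₂]`. -/
def TSeparated (m n z₁ z₂ : ℕ) (L : Type) [PartialOrder L]
    (s t : L → L) (x : L) : Prop :=
  ChittendenSetup m n L s t ∧ ¬ t^[z₁] x ≤ t^[z₂] x

/-- A setup together with a point separating `s^[z₁]` from `s^[z₂]`. -/
def SSeparated (m n z₁ z₂ : ℕ) (L : Type) [PartialOrder L]
    (s t : L → L) (x : L) : Prop :=
  ChittendenSetup m n L s t ∧ ¬ s^[z₁] x ≤ s^[z₂] x

/-!
On the powerset of a cycle `ZMod (n - 1)`, let `t` be the image under the rotation `· + 1` and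
`s` the constant map `∅`. The rotation has order dividing `n - 1`, so `t^[n] = t`, and `t^[z] {0}`
is the singleton `{z}`; since `1, …, n - 1` are distinct modulo `n - 1`, these singletons are
pairwise incomparable. Dually, `s` the image under a rotation of `ZMod (m - 1)` and `t` the
constant map `univ` separate the powers of `s`.
-/

open Function Set

theorem Function.iterate_const_of_ne_zero {α : Type*} (c : α) {k : ℕ} (hk : k ≠ 0) :
    (fun _ : α => c)^[k] = fun _ => c := by
  obtain ⟨k, rfl⟩ := Nat.exists_eq_succ_of_ne_zero hk
  funext x
  rw [iterate_succ_apply]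
  exact iterate_fixed rfl k

theorem Set.image_iterate {α : Type*} (f : α → α) : ∀ j : ℕ, (image f)^[j] = image (f^[j])
  | 0 => funext fun S => (image_id S).symm
  | j + 1 => by
    funext S
    rw [iterate_succ_apply, Set.image_iterate f j, iterate_succ, image_comp]

theorem Set.image_iterate_singleton_subset_iff {α : Type*} (f : α → α) (a : α) (i j : ℕ) :
    (image f)^[i] {a} ⊆ (image f)^[j] {a} ↔ f^[i] a = f^[j] a := by
  simp only [image_iterate, image_singleton, singleton_subset_iff, mem_singleton_iff]

theorem ZMod.add_one_iterate_self {n : ℕ} (hn : n ≠ 0) :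
    (· + (1 : ZMod (n - 1)))^[n] = (· + 1) := by
  rw [add_right_iterate, nsmul_one]
  obtain ⟨k, rfl⟩ := Nat.exists_eq_succ_of_ne_zero hn
  simp

theorem ZMod.natCast_injOn_Icc (k : ℕ) : (Icc 1 k).InjOn (Nat.cast : ℕ → ZMod k) := by
  intro a ha b hb hab
  rw [ZMod.natCast_eq_natCast_iff] at hab
  have hab' : a - 1 ≡ b - 1 [MOD k] :=
    Nat.ModEq.add_right_cancel' 1 (by rwa [Nat.sub_add_cancel ha.1, Nat.sub_add_cancel hb.1])
  have := hab'.eq_of_lt_of_lt (by grind) (by grind)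
  grind

theorem ZMod.add_one_iterate_zero_ne {k z₁ z₂ : ℕ} (h : z₁ ≠ z₂) (h₁ : z₁ ∈ Icc 1 k)
    (h₂ : z₂ ∈ Icc 1 k) : (· + (1 : ZMod k))^[z₁] 0 ≠ (· + 1)^[z₂] 0 := by
  simpa [add_right_iterate_apply] using mt (ZMod.natCast_injOn_Icc k h₁ h₂) h

section

variable {α : Type} {m n z₁ z₂ : ℕ} {f : α → α} {a : α}

theorem chittendenSetup_empty_image (hm : m ≠ 0) (hf : f^[n] = f) :
    ChittendenSetup m n (Set α) (fun _ => ∅) (image f) :=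
  ⟨monotone_const, monotone_image, fun S => empty_subset _, iterate_const_of_ne_zero _ hm,
    by rw [image_iterate, hf]⟩

theorem chittendenSetup_image_univ (hn : n ≠ 0) (hf : f^[m] = f) :
    ChittendenSetup m n (Set α) (image f) (fun _ => univ) :=
  ⟨monotone_image, monotone_const, fun S => subset_univ _, by rw [image_iterate, hf],
    iterate_const_of_ne_zero _ hn⟩

theorem tSeparated_empty_image (hm : m ≠ 0) (hf : f^[n] = f) (ha : f^[z₁] a ≠ f^[z₂] a) :
    TSeparated m n z₁ z₂ (Set α) (fun _ => ∅) (image f) {a} :=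
  ⟨chittendenSetup_empty_image hm hf, by rwa [image_iterate_singleton_subset_iff]⟩

theorem sSeparated_image_univ (hn : n ≠ 0) (hf : f^[m] = f) (ha : f^[z₁] a ≠ f^[z₂] a) :
    SSeparated m n z₁ z₂ (Set α) (image f) (fun _ => univ) {a} :=
  ⟨chittendenSetup_image_univ hn hf, by rwa [image_iterate_singleton_subset_iff]⟩

end

/-- Distinct powers of `t` in `{1, …, n-1}` (resp. of `s` in `{1, …, m-1}`)
are incomparable in general: suitable posets and points witness this. -/
theorem powers_incomparable (m n : ℕ) (hm : 2 ≤ m) (hmn : m ≤ n) :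
    (∀ z₁ z₂ : ℕ, z₁ ≠ z₂ → 1 ≤ z₁ → z₁ ≤ n - 1 → 1 ≤ z₂ → z₂ ≤ n - 1 →
      ∃ (L : Type) (inst : PartialOrder L) (s t : L → L) (x : L),
        @TSeparated m n z₁ z₂ L inst s t x) ∧
    (∀ z₁ z₂ : ℕ, z₁ ≠ z₂ → 1 ≤ z₁ → z₁ ≤ m - 1 → 1 ≤ z₂ → z₂ ≤ m - 1 →
      ∃ (L : Type) (inst : PartialOrder L) (s t : L → L) (x : L),
        @SSeparated m n z₁ z₂ L inst s t x) := by
  have hm₀ : m ≠ 0 := by omega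
  have hn₀ : n ≠ 0 := by omega
  constructor
  · intro z₁ z₂ hne h₁ h₁' h₂ h₂'
    exact ⟨_, _, _, _, _, tSeparated_empty_image hm₀ (ZMod.add_one_iterate_self hn₀)
      (ZMod.add_one_iterate_zero_ne hne ⟨h₁, h₁'⟩ ⟨h₂, h₂'⟩)⟩
  · intro z₁ z₂ hne h₁ h₁' h₂ h₂'
    exact ⟨_, _, _, _, _, sSeparated_image_univ hn₀ (ZMod.add_one_iterate_self hm₀)
      (ZMod.add_one_iterate_zero_ne hne ⟨h₁, h₁'⟩ ⟨h₂, h₂'⟩)⟩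
end

section
/- Fix integers 2 ≤ m ≤ n and let d = gcd(m−1, n−1). There exist a partial order L and monotone functions s, t : L → L with s x ≤ t x for all x, s^[m] = s, and t^[n] = t, such that for all nonempty words w, w' over {s, t} whose lengths are incongruent modulo d, the composites differ: ⟨w⟩ ≠ ⟨w'⟩. -/
/-- A Chittenden setup of type `(m, n)` in which the composites of any two
nonempty words whose lengths are incongruent mod `d` differ. -/
def LengthSeparating (m n d : ℕ) (L : Type) [PartialOrder L] (s t : L → L) : Prop :=
  Monotone s ∧ Monotone t ∧ (∀ y, s y ≤ t y) ∧ s^[m] = s ∧ t^[n] = t ∧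
    ∀ w w' : List Bool, w ≠ [] → w' ≠ [] →
      ¬ w.length ≡ w'.length [MOD d] → wordComp s t w ≠ wordComp s t w'

/-- With `d = gcd (m-1) (n-1)`, there is a poset with a Chittenden setup of
type `(m, n)` on which words of incongruent lengths mod `d` have distinct
composites. -/
theorem exists_length_separating (m n : ℕ) (hm : 2 ≤ m) (hmn : m ≤ n) :
    ∃ (L : Type) (inst : PartialOrder L) (s t : L → L),
      @LengthSeparating m n (Nat.gcd (m - 1) (n - 1)) L inst s t := by
  set d := Nat.gcd (m - 1) (n - 1) with hd
  have iter : ∀ k : ℕ, ∀ x : ZMod d, (fun x : ZMod d => x + 1)^[k] x = x + k := by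
    intro k
    induction k with
    | zero => intro x; simp
    | succ j ih =>
      intro x
      rw [Function.iterate_succ_apply', ih]
      push_cast; ring
  have hcast : ∀ k : ℕ, 1 ≤ k → d ∣ k - 1 → (k : ZMod d) = 1 := by
    intro k hk hdvd
    have hmod : (k : ℕ) ≡ 1 [MOD d] := ((Nat.modEq_iff_dvd' hk).mpr hdvd).symm
    have := (ZMod.natCast_eq_natCast_iff k 1 d).mpr hmod
    simpa using this
  refine ⟨ZMod d,
    { le := Eq, le_refl := fun _ => rfl,
      le_trans := fun _ _ _ h h' => Eq.trans h h',
      le_antisymm := fun _ _ h _ => h },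
    (fun x => x + 1), (fun x => x + 1), ?_, ?_, fun y => rfl, ?_, ?_, ?_⟩
  · intro a b h; exact show _ = _ from congrArg (fun x => x + 1) h
  · intro a b h; exact show _ = _ from congrArg (fun x => x + 1) h
  · funext x
    rw [iter m x, hcast m (by omega) (Nat.gcd_dvd_left _ _)]
  · funext x
    rw [iter n x, hcast n (by omega) (Nat.gcd_dvd_right _ _)]
  · intro w w' _ _ hne heq
    have key : ∀ v : List Bool, ∀ x : ZMod d,
        wordComp (fun x : ZMod d => x + 1) (fun x => x + 1) v x = x + v.length := by
      intro v
      induction v with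
      | nil => intro x; simp [wordComp]
      | cons b v ih =>
        intro x
        simp only [wordComp, Function.comp_apply, ih]
        cases b <;> · simp only [List.length_cons]; push_cast; ring
    have h0 := congrFun heq 0
    rw [key w 0, key w' 0] at h0
    simp only [zero_add] at h0
    exact hne ((ZMod.natCast_eq_natCast_iff _ _ _).mp h0)
end

section
/- Fix integers 2 ≤ m ≤ n, let d = gcd(m−1, n−1), and set k = d/2 + 1 if d is even and k = d + 1 if d is odd. Let (L, ≤) be a partial order with monotone s, t : L → L satisfying s x ≤ t x for all x, s^[m] = s, and t^[n] = t. Then (s ∘ t)^[k] = s ∘ t and (t ∘ s)^[k] = t ∘ s. -/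
private lemma iterFix {L : Type*} (s : L → L) (a : ℕ) (h : s^[a+1] = s) :
    ∀ i, s^[i*a+1] = s := by
  intro i
  induction i with
  | zero => simp
  | succ i ih =>
    have e : (i+1)*a+1 = a + (i*a+1) := by ring
    rw [e, Function.iterate_add, ih, ← Function.iterate_succ, h]

private lemma W1 {L : Type*} [Preorder L] {s t : L → L} (hs : Monotone s)
    (hst : ∀ x, s x ≤ t x) :
    ∀ j x, s^[2*j+1] (t x) ≤ (s ∘ t)^[j+1] x := by
  intro j
  induction j with
  | zero => intro x; simp
  | succ j ih =>
    intro x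
    have e1 : s^[2*(j+1)+1] (t x) = s^[2*j+1] (s (s (t x))) := by
      have e : 2*(j+1)+1 = (2*j+1) + 2 := by ring
      rw [e, Function.iterate_add_apply]
      simp
    have e2 : (s ∘ t)^[j+1+1] x = (s ∘ t)^[j+1] (s (t x)) := by
      rw [Function.iterate_succ_apply]; rfl
    rw [e1, e2]
    calc s^[2*j+1] (s (s (t x))) ≤ s^[2*j+1] (t (s (t x))) := (hs.iterate _) (hst _)
      _ ≤ (s ∘ t)^[j+1] (s (t x)) := ih _

private lemma W2 {L : Type*} [Preorder L] {s t : L → L} (hs : Monotone s)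
    (ht : Monotone t) (hst : ∀ x, s x ≤ t x) :
    ∀ j x, (s ∘ t)^[j+1] x ≤ s (t^[2*j+1] x) := by
  intro j
  induction j with
  | zero => intro x; simp
  | succ j ih =>
    intro x
    have e1 : t^[2*(j+1)+1] x = t^[2*j+1] (t (t x)) := by
      have e : 2*(j+1)+1 = (2*j+1) + 2 := by ring
      rw [e, Function.iterate_add_apply]
      simp
    have e2 : (s ∘ t)^[j+1+1] x = (s ∘ t)^[j+1] (s (t x)) := by
      rw [Function.iterate_succ_apply]; rfl
    rw [e1, e2]
    calc (s ∘ t)^[j+1] (s (t x)) ≤ s (t^[2*j+1] (s (t x))) := ih _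
      _ ≤ s (t^[2*j+1] (t (t x))) := hs ((ht.iterate _) (hst _))

private lemma W3 {L : Type*} [Preorder L] {s t : L → L} (hs : Monotone s)
    (ht : Monotone t) (hst : ∀ x, s x ≤ t x) :
    ∀ j x, t (s^[2*j+1] x) ≤ (t ∘ s)^[j+1] x := by
  intro j
  induction j with
  | zero => intro x; simp
  | succ j ih =>
    intro x
    have e1 : s^[2*(j+1)+1] x = s^[2*j+1] (s (s x)) := by
      have e : 2*(j+1)+1 = (2*j+1) + 2 := by ring
      rw [e, Function.iterate_add_apply]
      simp
    have e2 : (t ∘ s)^[j+1+1] x = (t ∘ s)^[j+1] (t (s x)) := by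
      rw [Function.iterate_succ_apply]; rfl
    rw [e1, e2]
    calc t (s^[2*j+1] (s (s x))) ≤ t (s^[2*j+1] (t (s x))) := ht ((hs.iterate _) (hst _))
      _ ≤ (t ∘ s)^[j+1] (t (s x)) := ih _

private lemma W4 {L : Type*} [Preorder L] {s t : L → L} (ht : Monotone t)
    (hst : ∀ x, s x ≤ t x) :
    ∀ j x, (t ∘ s)^[j+1] x ≤ t^[2*j+1] (s x) := by
  intro j
  induction j with
  | zero => intro x; simp
  | succ j ih =>
    intro x
    have e1 : t^[2*(j+1)+1] (s x) = t^[2*j+1] (t (t (s x))) := by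
      have e : 2*(j+1)+1 = (2*j+1) + 2 := by ring
      rw [e, Function.iterate_add_apply]
      simp
    have e2 : (t ∘ s)^[j+1+1] x = (t ∘ s)^[j+1] (t (s x)) := by
      rw [Function.iterate_succ_apply]; rfl
    rw [e1, e2]
    calc (t ∘ s)^[j+1] (t (s x)) ≤ t^[2*j+1] (s (t (s x))) := ih _
      _ ≤ t^[2*j+1] (t (t (s x))) := (ht.iterate _) (hst _)

private lemma upStep {L : Type*} [Preorder L] {u : L → L} (hu : Monotone u) {α : ℕ}
    (h : ∀ x, u x ≤ u^[α+1] x) : ∀ (i : ℕ) (x : L), u x ≤ u^[i*α+1] x := by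
  intro i
  induction i with
  | zero => intro x; simp
  | succ i ih =>
    intro x
    have e : (i+1)*α+1 = i*α + (α+1) := by ring
    rw [e, Function.iterate_add_apply]
    calc u x ≤ u^[i*α+1] x := ih x
      _ = u^[i*α] (u x) := Function.iterate_succ_apply u _ x
      _ ≤ u^[i*α] (u^[α+1] x) := (hu.iterate _) (h x)

private lemma downStep {L : Type*} [Preorder L] {u : L → L} (hu : Monotone u) {β : ℕ}
    (h : ∀ x, u^[β+1] x ≤ u x) : ∀ (j : ℕ) (x : L), u^[j*β+1] x ≤ u x := by
  intro j
  induction j with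
  | zero => intro x; simp
  | succ j ih =>
    intro x
    have e : (j+1)*β+1 = j*β + (β+1) := by ring
    rw [e, Function.iterate_add_apply]
    calc u^[j*β] (u^[β+1] x) ≤ u^[j*β] (u x) := (hu.iterate _) (h x)
      _ = u^[j*β+1] x := (Function.iterate_succ_apply u _ x).symm
      _ ≤ u x := ih x

private lemma mainEq {L : Type*} [PartialOrder L] {u : L → L} (hu : Monotone u)
    {α β e : ℕ}
    (hup : ∀ x, u x ≤ u^[α+1] x) (hdn : ∀ x, u^[β+1] x ≤ u x)
    (h1 : ∃ i j : ℕ, i * α = e + j * β) (h2 : ∃ p q : ℕ, p * β = e + q * α) :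
    u^[e+1] = u := by
  funext x
  apply le_antisymm
  · obtain ⟨p, q, hpq⟩ := h2
    calc u^[e+1] x = u (u^[e] x) := Function.iterate_succ_apply' u _ x
      _ ≤ u^[q*α+1] (u^[e] x) := upStep hu hup q _
      _ = u^[q*α+1+e] x := (Function.iterate_add_apply u _ _ x).symm
      _ = u^[p*β+1] x := by rw [show q*α+1+e = p*β+1 by omega]
      _ ≤ u x := downStep hu hdn p x
  · obtain ⟨i, j, hij⟩ := h1
    calc u x ≤ u^[i*α+1] x := upStep hu hup i x
      _ = u^[j*β+1+e] x := by rw [show i*α+1 = j*β+1+e by omega]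
      _ = u^[j*β+1] (u^[e] x) := Function.iterate_add_apply u _ _ x
      _ ≤ u (u^[e] x) := downStep hu hdn j _
      _ = u^[e+1] x := (Function.iterate_succ_apply' u _ x).symm

private lemma bez (α β : ℕ) (hα : 0 < α) (hβ : 0 < β) :
    ∃ i j : ℕ, i * α = Nat.gcd α β + j * β := by
  have h := Nat.gcd_eq_gcd_ab α β
  set x := Nat.gcdA α β with hx
  set y := Nat.gcdB α β with hy
  set N : ℤ := x.natAbs + y.natAbs with hN
  have hN0 : 0 ≤ N := by positivity
  have hNx : -x ≤ N := by simp only [hN]; omega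
  have hNy : y ≤ N := by simp only [hN]; omega
  have hβ1 : (1:ℤ) ≤ (β:ℤ) := by exact_mod_cast hβ
  have hα1 : (1:ℤ) ≤ (α:ℤ) := by exact_mod_cast hα
  have hi0 : 0 ≤ x + N * β := by nlinarith
  have hj0 : 0 ≤ N * α - y := by nlinarith
  have hZ : (x + N * β) * α = (Nat.gcd α β : ℤ) + (N * α - y) * β := by
    linear_combination (-1 : ℤ) * h
  refine ⟨(x + N * β).toNat, (N * α - y).toNat, ?_⟩
  have h1 : ((x + N * β).toNat : ℤ) = x + N * β := Int.toNat_of_nonneg hi0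
  have h2 : ((N * α - y).toNat : ℤ) = N * α - y := Int.toNat_of_nonneg hj0
  have : ((x + N * β).toNat : ℤ) * α = (Nat.gcd α β : ℤ) + ((N * α - y).toNat : ℤ) * β := by
    rw [h1, h2]; exact hZ
  exact_mod_cast this

/-- With `d = gcd (m-1) (n-1)` and `k = d/2 + 1` if `d` is even, `k = d + 1` if
`d` is odd, we have `(s ∘ t)^[k] = s ∘ t` and `(t ∘ s)^[k] = t ∘ s`. -/
theorem st_iterate_idempotent {L : Type*} [PartialOrder L] (m n : ℕ)
    (hm : 2 ≤ m) (hmn : m ≤ n)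
    (s t : L → L) (hs : Monotone s) (ht : Monotone t) (hst : ∀ x, s x ≤ t x)
    (hsm : s^[m] = s) (htn : t^[n] = t)
    (d : ℕ) (hd : d = Nat.gcd (m - 1) (n - 1))
    (k : ℕ) (hk : k = if Even d then d / 2 + 1 else d + 1) :
    (s ∘ t)^[k] = s ∘ t ∧ (t ∘ s)^[k] = t ∘ s := by
  obtain ⟨a, rfl⟩ : ∃ a, m = a + 1 := ⟨m - 1, by omega⟩
  obtain ⟨b, rfl⟩ : ∃ b, n = b + 1 := ⟨n - 1, by omega⟩
  have ha : 1 ≤ a := by omega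
  have hb : 1 ≤ b := by omega
  simp only [Nat.add_sub_cancel] at hd
  obtain ⟨α, β, e, hα1, hβ1, hsα, htβ, hgcd, hke⟩ :
      ∃ α β e : ℕ, 1 ≤ α ∧ 1 ≤ β ∧ s^[2*α+1] = s ∧ t^[2*β+1] = t ∧
        Nat.gcd α β = e ∧ k = e + 1 := by
    by_cases hev : Even d
    · have hda : d ∣ a := hd ▸ Nat.gcd_dvd_left a b
      have hdb : d ∣ b := hd ▸ Nat.gcd_dvd_right a b
      have h2d : 2 ∣ d := hev.two_dvd
      obtain ⟨a', ha'⟩ : ∃ a', a = 2 * a' := (dvd_trans h2d hda)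
      obtain ⟨b', hb'⟩ : ∃ b', b = 2 * b' := (dvd_trans h2d hdb)
      have hg2 : 2 * Nat.gcd a' b' = d := by
        rw [← Nat.gcd_mul_left, ← ha', ← hb', ← hd]
      refine ⟨a', b', Nat.gcd a' b', by omega, by omega, ?_, ?_, rfl, ?_⟩
      · rw [show 2*a'+1 = a+1 by omega]; exact hsm
      · rw [show 2*b'+1 = b+1 by omega]; exact htn
      · rw [if_pos hev] at hk; omega
    · refine ⟨a, b, d, ha, hb, iterFix s a hsm 2, iterFix t b htn 2, hd.symm, ?_⟩
      rw [if_neg hev] at hk; omega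
  have h1 := bez α β hα1 hβ1
  have h2 := bez β α hβ1 hα1
  rw [Nat.gcd_comm] at h2
  rw [hgcd] at h1 h2
  constructor
  · have hup : ∀ x, (s ∘ t) x ≤ (s ∘ t)^[α+1] x := by
      intro x
      have h := W1 hs hst α x
      rw [hsα] at h
      exact h
    have hdn : ∀ x, (s ∘ t)^[β+1] x ≤ (s ∘ t) x := by
      intro x
      have h := W2 hs ht hst β x
      rw [htβ] at h
      exact h
    rw [hke]
    exact mainEq (hs.comp ht) hup hdn h1 h2
  · have hup : ∀ x, (t ∘ s) x ≤ (t ∘ s)^[α+1] x := by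
      intro x
      have h := W3 hs ht hst α x
      rw [hsα] at h
      exact h
    have hdn : ∀ x, (t ∘ s)^[β+1] x ≤ (t ∘ s) x := by
      intro x
      have h := W4 ht hst β x
      rw [htβ] at h
      exact h
    rw [hke]
    exact mainEq (ht.comp hs) hup hdn h1 h2
end

section
/- Fix integers 2 ≤ m ≤ n, let d = gcd(m−1, n−1), and set K = d/2 + 1 if d is even and K = d + 1 if d is odd. Then K is the least integer k > 1 with the property that for every partial order L and all monotone functions s, t : L → L satisfying s x ≤ t x for all x, s^[m] = s, and t^[n] = t, one has (s ∘ t)^[k] = s ∘ t. -/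
/-- `k` is an exponent making `s ∘ t` "idempotent" for every Chittenden setup
of type `(m, n)` on every poset. -/
def GoodExponent (m n k : ℕ) : Prop :=
  ∀ (L : Type*) [PartialOrder L] (s t : L → L),
    Monotone s → Monotone t → (∀ x, s x ≤ t x) → s^[m] = s → t^[n] = t →
      (s ∘ t)^[k] = s ∘ t

/- ### Auxiliary lemmas -/

private lemma bez_s17 (p q : ℕ) (hp : 0 < p) (hq : 0 < q) :
    ∃ x y : ℕ, x * p = Nat.gcd p q + y * q := by
  have h := Nat.gcd_eq_gcd_ab p q
  set u := Nat.gcdA p q with hu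
  set v := Nat.gcdB p q with hv
  set N : ℤ := u.natAbs + v.natAbs + 1 with hN
  have hu1 : -(u.natAbs : ℤ) ≤ u := by omega
  have hv1 : v ≤ (v.natAbs : ℤ) := by omega
  have hq1 : (1:ℤ) ≤ q := by exact_mod_cast hq
  have hp1 : (1:ℤ) ≤ p := by exact_mod_cast hp
  have hN0 : 0 ≤ (u.natAbs : ℤ) := by positivity
  have hN1 : 0 ≤ (v.natAbs : ℤ) := by positivity
  have hx : 0 ≤ u + N * q := by nlinarith
  have hy : 0 ≤ N * p - v := by nlinarith
  refine ⟨(u + N * q).toNat, (N * p - v).toNat, ?_⟩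
  have hx' : ((u + N * q).toNat : ℤ) = u + N * q := Int.toNat_of_nonneg hx
  have hy' : ((N * p - v).toNat : ℤ) = N * p - v := Int.toNat_of_nonneg hy
  have : ((u + N * q).toNat : ℤ) * p = Nat.gcd p q + ((N * p - v).toNat : ℤ) * q := by
    rw [hx', hy', h]; ring
  exact_mod_cast this

/-- iterating a map with `s^[a+1] = s`. -/
private lemma iter_fix {L : Type*} {s : L → L} {a : ℕ} (h : s^[a + 1] = s) :
    ∀ j, s^[j * a + 1] = s := by
  intro j
  induction j with
  | zero => simp
  | succ j ih =>
    have e : (j + 1) * a + 1 = (j * a + 1) + a := by ring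
    rw [e, Function.iterate_add, ih]
    calc s ∘ s^[a] = s^[a + 1] := by rw [Function.iterate_succ']
    _ = s := h

section Steps
variable {L : Type*} [PartialOrder L] {s t : L → L}

private lemma stepA (hs : Monotone s) (hst : ∀ x, s x ≤ t x) :
    ∀ i x, s^[2 * i + 1] (t x) ≤ (s ∘ t)^[i + 1] x := by
  intro i
  induction i with
  | zero => intro x; simp
  | succ i ih =>
    intro x
    have h1 : s^[2 * (i + 1) + 1] (t x) = s^[2 * i + 1] (s (s (t x))) := by
      have e : 2 * (i + 1) + 1 = (2 * i + 1) + 2 := by ring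
      rw [e, Function.iterate_add_apply]
      rfl
    have h2 : s^[2 * i + 1] (s (s (t x))) ≤ s^[2 * i + 1] (t (s (t x))) :=
      (hs.iterate _) (hst (s (t x)))
    have h3 : s^[2 * i + 1] (t (s (t x))) ≤ (s ∘ t)^[i + 1] (s (t x)) := ih (s (t x))
    have h4 : (s ∘ t)^[i + 1] (s (t x)) = (s ∘ t)^[i + 1 + 1] x := by
      rw [Function.iterate_succ_apply]; rfl
    rw [h1, ← h4]
    exact le_trans h2 h3

private lemma stepB (hs : Monotone s) (ht : Monotone t) (hst : ∀ x, s x ≤ t x) :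
    ∀ i x, (s ∘ t)^[i + 1] x ≤ s (t^[2 * i + 1] x) := by
  intro i
  induction i with
  | zero => intro x; simp
  | succ i ih =>
    intro x
    have h1 : (s ∘ t)^[i + 1 + 1] x = (s ∘ t)^[i + 1] (s (t x)) := by
      rw [Function.iterate_succ_apply]; rfl
    have h2 : (s ∘ t)^[i + 1] (s (t x)) ≤ s (t^[2 * i + 1] (s (t x))) := ih _
    have h3 : t^[2 * i + 1] (s (t x)) ≤ t^[2 * i + 1] (t (t x)) :=
      (ht.iterate _) (hst (t x))
    have h4 : t^[2 * i + 1] (t (t x)) = t^[2 * (i + 1) + 1] x := by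
      have e : 2 * (i + 1) + 1 = (2 * i + 1) + 2 := by ring
      rw [e, Function.iterate_add_apply]
      rfl
    rw [h1, ← h4]
    exact le_trans h2 (hs h3)

/-- one upward step, iterated `c` times -/
private lemma upMany (hs : Monotone s) (hst : ∀ x, s x ≤ t x) {p : ℕ}
    (hfix : s^[2 * p + 1] = s) :
    ∀ c j x, (s ∘ t)^[j + 1] x ≤ (s ∘ t)^[j + 1 + c * p] x := by
  have single : ∀ y, (s ∘ t) y ≤ (s ∘ t)^[p + 1] y := by
    intro y
    have h := stepA hs hst p y
    rwa [hfix] at h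
  have step : ∀ j x, (s ∘ t)^[j + 1] x ≤ (s ∘ t)^[j + 1 + p] x := by
    intro j x
    have e1 : (s ∘ t)^[j + 1] x = (s ∘ t) ((s ∘ t)^[j] x) := Function.iterate_succ_apply' _ _ _
    have e2 : (s ∘ t)^[j + 1 + p] x = (s ∘ t)^[p + 1] ((s ∘ t)^[j] x) := by
      have e : j + 1 + p = (p + 1) + j := by ring
      rw [e, Function.iterate_add_apply]
    rw [e1, e2]
    exact single _
  intro c
  induction c with
  | zero => intro j x; simp
  | succ c ih =>
    intro j x
    have h := step (j + c * p) x
    have e : j + c * p + 1 + p = j + 1 + (c + 1) * p := by ring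
    have e2 : j + c * p + 1 = j + 1 + c * p := by ring
    rw [e, e2] at h
    exact le_trans (ih j x) h

private lemma downMany (hs : Monotone s) (ht : Monotone t) (hst : ∀ x, s x ≤ t x) {q : ℕ}
    (hfix : t^[2 * q + 1] = t) :
    ∀ c j x, (s ∘ t)^[j + 1 + c * q] x ≤ (s ∘ t)^[j + 1] x := by
  have single : ∀ y, (s ∘ t)^[q + 1] y ≤ (s ∘ t) y := by
    intro y
    have h := stepB hs ht hst q y
    rwa [hfix] at h
  have step : ∀ j x, (s ∘ t)^[j + 1 + q] x ≤ (s ∘ t)^[j + 1] x := by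
    intro j x
    have e1 : (s ∘ t)^[j + 1] x = (s ∘ t) ((s ∘ t)^[j] x) := Function.iterate_succ_apply' _ _ _
    have e2 : (s ∘ t)^[j + 1 + q] x = (s ∘ t)^[q + 1] ((s ∘ t)^[j] x) := by
      have e : j + 1 + q = (q + 1) + j := by ring
      rw [e, Function.iterate_add_apply]
    rw [e1, e2]
    exact single _
  intro c
  induction c with
  | zero => intro j x; simp
  | succ c ih =>
    intro j x
    have h1 := step (j + c * q) x
    have e : j + c * q + 1 + q = j + 1 + (c + 1) * q := by ring
    have e2 : j + c * q + 1 = j + 1 + c * q := by ring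
    rw [e, e2] at h1
    exact le_trans h1 (ih j x)

end Steps

/-- Upper bound: `gcd p q + 1` is a good exponent, where `2*p` is a multiple of `m-1`
and `2*q` is a multiple of `n-1`. -/
private lemma good_of_gcd (m n : ℕ) (hm : 2 ≤ m) (hn : 2 ≤ n)
    {p q : ℕ} (hp : 0 < p) (hq : 0 < q)
    (hpa : (m - 1) ∣ 2 * p) (hqb : (n - 1) ∣ 2 * q) :
    GoodExponent m n (1 + Nat.gcd p q) := by
  intro L _ s t hs ht hst hsm htn
  set g := Nat.gcd p q with hg
  have hsfix : s^[2 * p + 1] = s := by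
    obtain ⟨c, hc⟩ := hpa
    have h1 : s^[(m - 1) + 1] = s := by
      have e : m - 1 + 1 = m := by omega
      rw [e, hsm]
    have h2 := iter_fix h1 c
    have e : c * (m - 1) + 1 = 2 * p + 1 := by rw [Nat.mul_comm, ← hc]
    rwa [e] at h2
  have htfix : t^[2 * q + 1] = t := by
    obtain ⟨c, hc⟩ := hqb
    have h1 : t^[(n - 1) + 1] = t := by
      have e : n - 1 + 1 = n := by omega
      rw [e, htn]
    have h2 := iter_fix h1 c
    have e : c * (n - 1) + 1 = 2 * q + 1 := by rw [Nat.mul_comm, ← hc]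
    rwa [e] at h2
  rw [Nat.add_comm 1 g]
  funext x
  apply le_antisymm
  · -- (s∘t)^[g+1] ≤ s∘t : use y' * q = g + x' * p
    obtain ⟨y', x', hxy⟩ := bez_s17 q p hq hp
    rw [Nat.gcd_comm, ← hg] at hxy
    calc (s ∘ t)^[g + 1] x ≤ (s ∘ t)^[g + 1 + x' * p] x := upMany hs hst hsfix x' g x
    _ = (s ∘ t)^[0 + 1 + y' * q] x := by rw [show g + 1 + x' * p = 0 + 1 + y' * q by omega]
    _ ≤ (s ∘ t)^[0 + 1] x := downMany hs ht hst htfix y' 0 x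
    _ = (s ∘ t) x := by norm_num
  · -- s∘t ≤ (s∘t)^[g+1] : use x' * p = g + y' * q
    obtain ⟨x', y', hxy⟩ := bez_s17 p q hp hq
    rw [← hg] at hxy
    calc (s ∘ t) x = (s ∘ t)^[0 + 1] x := by norm_num
    _ ≤ (s ∘ t)^[0 + 1 + x' * p] x := upMany hs hst hsfix x' 0 x
    _ = (s ∘ t)^[g + 1 + y' * q] x := by rw [show 0 + 1 + x' * p = g + 1 + y' * q by omega]
    _ ≤ (s ∘ t)^[g + 1] x := downMany hs ht hst htfix y' g x

/- ### Lower bound: the cyclic counterexample -/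

private def discPO (α : Type*) : PartialOrder α where
  le x y := x = y
  le_refl _ := rfl
  le_trans a b c h1 h2 := by
    have e1 : a = b := h1
    have e2 : b = c := h2
    show a = c
    rw [e1, e2]
  le_antisymm a b h _ := h

universe u

private lemma counter {d m n k : ℕ} (hd : 0 < d) (hm : 1 ≤ m) (hn : 1 ≤ n)
    (hdm : d ∣ m - 1) (hdn : d ∣ n - 1) (hk : 1 ≤ k)
    (hgood : GoodExponent.{u} m n k) : d ∣ 2 * k - 2 := by
  letI : PartialOrder (ULift.{u,0} (ZMod d)) := discPO _
  set s : ULift.{u,0} (ZMod d) → ULift.{u,0} (ZMod d) := fun x => ⟨x.down + 1⟩ with hs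
  have hiter : ∀ (j : ℕ) (x : ULift.{u,0} (ZMod d)), s^[j] x = ⟨x.down + (j : ZMod d)⟩ := by
    intro j
    induction j with
    | zero => intro x; simp
    | succ j ih =>
      intro x
      rw [Function.iterate_succ_apply, ih]
      show (⟨(x.down + 1) + (j : ZMod d)⟩ : ULift.{u,0} (ZMod d)) = ⟨x.down + ((j : ℕ) + 1 : ℕ)⟩
      congr 1
      push_cast
      ring
  have hmono : Monotone s := by
    intro x y h
    have e : x = y := h
    show s x = s y
    rw [e]
  have hfix : ∀ j : ℕ, 1 ≤ j → d ∣ j - 1 → s^[j] = s := by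
    intro j hj hdj
    funext x
    rw [hiter]
    show (⟨x.down + (j : ZMod d)⟩ : ULift.{u,0} (ZMod d)) = ⟨x.down + 1⟩
    congr 1
    have e : ((j : ℕ) : ZMod d) = ((1 + (j - 1) : ℕ) : ZMod d) := by congr 1; omega
    rw [e]
    push_cast
    rw [(ZMod.natCast_eq_zero_iff _ _).2 hdj]
    ring
  have key := hgood (ULift.{u,0} (ZMod d)) s s hmono hmono (fun x => le_refl _)
    (hfix m hm hdm) (hfix n hn hdn)
  have hss : s ∘ s = s^[2] := by
    funext x
    rw [Function.iterate_succ_apply, Function.iterate_one]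
    rfl
  rw [hss, ← Function.iterate_mul] at key
  have hev := congrFun key (⟨0⟩ : ULift.{u,0} (ZMod d))
  rw [hiter, hiter] at hev
  have h2 : ((2 * k : ℕ) : ZMod d) = ((2 : ℕ) : ZMod d) := by
    have := congrArg ULift.down hev
    simpa using this
  have hmod : 2 * k ≡ 2 [MOD d] := (ZMod.natCast_eq_natCast_iff _ _ _).1 h2
  exact (Nat.modEq_iff_dvd' (by omega)).1 hmod.symm

/-- the gcd arithmetic: `K - 1 = gcd δa δb`. -/
private lemma gcd_half (a b : ℕ) (ha : 0 < a) (hb : 0 < b) :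
    (if Even (Nat.gcd a b) then Nat.gcd a b / 2 else Nat.gcd a b)
      = Nat.gcd (if Even a then a / 2 else a) (if Even b then b / 2 else b) := by
  rcases Nat.even_or_odd a with hae | hao
  · rcases Nat.even_or_odd b with hbe | hbo
    · -- both even
      have h2a : a % 2 = 0 := Nat.even_iff.1 hae
      have h2b : b % 2 = 0 := Nat.even_iff.1 hbe
      have hg2 : 2 ∣ Nat.gcd a b := Nat.dvd_gcd (by omega) (by omega)
      rw [if_pos (Nat.even_iff.2 (by omega)), if_pos hae, if_pos hbe]
      have key : Nat.gcd a b = 2 * Nat.gcd (a / 2) (b / 2) := by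
        conv_lhs => rw [show a = 2 * (a / 2) by omega, show b = 2 * (b / 2) by omega]
        exact Nat.gcd_mul_left 2 _ _
      omega
    · -- a even, b odd
      have h2a : a % 2 = 0 := Nat.even_iff.1 hae
      have hb1 : b % 2 = 1 := Nat.odd_iff.1 hbo
      have hodd : ¬ Even (Nat.gcd a b) := by
        intro he
        have h1 : 2 ∣ Nat.gcd a b := he.two_dvd
        have h2 : Nat.gcd a b ∣ b := Nat.gcd_dvd_right a b
        have := dvd_trans h1 h2
        omega
      rw [if_neg hodd, if_pos hae, if_neg (by rw [Nat.even_iff]; omega)]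
      conv_lhs => rw [show a = 2 * (a / 2) by omega]
      exact (Nat.coprime_two_left.2 hbo).gcd_mul_left_cancel _
  · -- a odd
    have ha1 : a % 2 = 1 := Nat.odd_iff.1 hao
    have hodd : ¬ Even (Nat.gcd a b) := by
      intro he
      have h1 : 2 ∣ Nat.gcd a b := he.two_dvd
      have h2 : Nat.gcd a b ∣ a := Nat.gcd_dvd_left a b
      have := dvd_trans h1 h2
      omega
    rcases Nat.even_or_odd b with hbe | hbo
    · -- a odd, b even
      have h2b : b % 2 = 0 := Nat.even_iff.1 hbe
      rw [if_neg hodd, if_neg (by rw [Nat.even_iff]; omega), if_pos hbe]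
      conv_lhs => rw [show b = 2 * (b / 2) by omega]
      rw [Nat.gcd_comm a (2 * (b / 2)), (Nat.coprime_two_left.2 hao).gcd_mul_left_cancel _,
        Nat.gcd_comm]
    · -- both odd
      have hb1 : b % 2 = 1 := Nat.odd_iff.1 hbo
      rw [if_neg hodd, if_neg (by rw [Nat.even_iff]; omega),
        if_neg (by rw [Nat.even_iff]; omega)]

/-- Answer to Chittenden's question: with `d = gcd (m-1) (n-1)`, the least
exponent `k > 1` with `(s ∘ t)^[k] = s ∘ t` for all setups of type `(m, n)` is
`d/2 + 1` if `d` is even and `d + 1` if `d` is odd. -/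
theorem least_good_exponent (m n : ℕ) (hm : 2 ≤ m) (hmn : m ≤ n)
    (d : ℕ) (hd : d = Nat.gcd (m - 1) (n - 1))
    (K : ℕ) (hK : K = if Even d then d / 2 + 1 else d + 1) :
    IsLeast {k : ℕ | 1 < k ∧ GoodExponent m n k} K := by
  have hn : 2 ≤ n := le_trans hm hmn
  set a := m - 1 with hab
  set b := n - 1 with hbb
  have ha : 0 < a := by omega
  have hb : 0 < b := by omega
  set p : ℕ := if Even a then a / 2 else a with hp'
  set q : ℕ := if Even b then b / 2 else b with hq'
  have hpp : 0 < p := by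
    rw [hp']; split
    · rename_i h; have := Nat.even_iff.1 h; omega
    · exact ha
  have hqq : 0 < q := by
    rw [hq']; split
    · rename_i h; have := Nat.even_iff.1 h; omega
    · exact hb
  have hpa : a ∣ 2 * p := by
    rw [hp']; split
    · rename_i h; have := Nat.even_iff.1 h; exact ⟨1, by omega⟩
    · exact ⟨2, by ring⟩
  have hqb : b ∣ 2 * q := by
    rw [hq']; split
    · rename_i h; have := Nat.even_iff.1 h; exact ⟨1, by omega⟩
    · exact ⟨2, by ring⟩
  have hgh := gcd_half a b ha hb
  rw [← hd, ← hp', ← hq'] at hgh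
  have hKg : K = 1 + Nat.gcd p q := by
    rw [hK, ← hgh]
    rcases Nat.even_or_odd d with he | ho
    · simp only [if_pos he]; omega
    · have hne : ¬ Even d := by rw [Nat.even_iff]; have := Nat.odd_iff.1 ho; omega
      simp only [if_neg hne]; omega
  constructor
  · -- K is good
    refine ⟨by have := Nat.gcd_pos_of_pos_left q hpp; omega, ?_⟩
    rw [hKg]
    exact good_of_gcd m n hm hn hpp hqq hpa hqb
  · -- K is a lower bound
    rintro k ⟨hk1, hk2⟩
    have hdvd : d ∣ 2 * k - 2 := by
      refine counter ?_ (by omega) (by omega) ?_ ?_ (by omega) hk2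
      · rw [hd]; exact Nat.gcd_pos_of_pos_left _ ha
      · rw [hd]; exact Nat.gcd_dvd_left _ _
      · rw [hd]; exact Nat.gcd_dvd_right _ _
    rw [hK]
    split
    · rename_i he
      have hd2 : d % 2 = 0 := Nat.even_iff.1 he
      obtain ⟨c, hc⟩ := hdvd
      have hc1 : 1 ≤ c := by
        rcases Nat.eq_zero_or_pos c with h | h
        · subst h; omega
        · exact h
      have hdc : d * 1 ≤ d * c := Nat.mul_le_mul_left d hc1
      omega
    · rename_i he
      have hdo : Odd d := Nat.odd_iff.2 (by rw [Nat.even_iff] at he; omega)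
      have h2 : 2 * k - 2 = 2 * (k - 1) := by omega
      rw [h2] at hdvd
      have hdk : d ∣ k - 1 := Nat.Coprime.dvd_of_dvd_mul_left hdo.coprime_two_right hdvd
      have hle : d ≤ k - 1 := Nat.le_of_dvd (by omega) hdk
      omega
end

section
/- Let m ≥ 2 be an integer, (L, ≤) a partial order, and s : L → L monotone with s^[m] = s. If 1 ≤ j, k ≤ m−1 and s^[j] x ≤ s^[k] x for all x ∈ L, then s^[k] x ≤ s^[j] x for all x ∈ L; consequently s^[j] = s^[k]. -/
/-- For a monotone `s` with `s^[m] = s` and `1 ≤ j, k ≤ m-1`, the pointwise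
inequality `s^[j] ≤ s^[k]` implies the reverse inequality, hence equality. -/
theorem iterate_le_antisymm {L : Type*} [PartialOrder L] (m : ℕ) (hm : 2 ≤ m)
    (s : L → L) (hs : Monotone s) (hsm : s^[m] = s)
    (j k : ℕ) (hj1 : 1 ≤ j) (hjm : j ≤ m - 1) (hk1 : 1 ≤ k) (hkm : k ≤ m - 1)
    (h : ∀ x, s^[j] x ≤ s^[k] x) :
    (∀ x, s^[k] x ≤ s^[j] x) ∧ s^[j] = s^[k] := by
  set p := m - 1 with hp
  have hp1 : 1 ≤ p := by omega
  have hA : ∀ n, 1 ≤ n → s^[n + p] = s^[n] := by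
    intro n hn
    have h1 : n + p = (n - 1) + m := by omega
    rw [h1, Function.iterate_add, hsm, ← Function.iterate_succ,
      Nat.succ_eq_add_one, Nat.sub_add_cancel hn]
  have hper : ∀ n, 1 ≤ n → ∀ t, s^[n + t * p] = s^[n] := by
    intro n hn t
    induction t with
    | zero => simp
    | succ t ih =>
      rw [show n + (t + 1) * p = (n + t * p) + p by ring, hA _ (by omega), ih]
  have key : ∀ x, s^[k] x ≤ s^[j] x := by
    rcases le_total j k with hle | hle
    · obtain ⟨d, rfl⟩ := Nat.exists_eq_add_of_le hle
      have hd : ∀ t x, s^[j + d] x ≤ s^[j + (t + 1) * d] x := by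
        intro t
        induction t with
        | zero => intro x; simp
        | succ t ih =>
          intro x
          have e1 : s^[j + (t + 1) * d] x = s^[j] (s^[(t + 1) * d] x) :=
            Function.iterate_add_apply s j ((t + 1) * d) x
          have e2 : s^[j + (t + 2) * d] x = s^[j + d] (s^[(t + 1) * d] x) := by
            rw [show j + (t + 2) * d = (j + d) + (t + 1) * d by ring]
            exact Function.iterate_add_apply s (j + d) ((t + 1) * d) x
          have step : s^[j + (t + 1) * d] x ≤ s^[j + (t + 2) * d] x := by
            rw [e1, e2]; exact h _
          exact le_trans (ih x) step
      intro x
      have hx := hd (p - 1) x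
      rw [show (p - 1) + 1 = p by omega,
        show j + p * d = j + d * p by ring, hper j hj1 d] at hx
      exact hx
    · obtain ⟨d, rfl⟩ := Nat.exists_eq_add_of_le hle
      have hd : ∀ t x, s^[k + (t + 1) * d] x ≤ s^[k + d] x := by
        intro t
        induction t with
        | zero => intro x; simp
        | succ t ih =>
          intro x
          have e1 : s^[k + (t + 1) * d] x = s^[k] (s^[(t + 1) * d] x) :=
            Function.iterate_add_apply s k ((t + 1) * d) x
          have e2 : s^[k + (t + 2) * d] x = s^[k + d] (s^[(t + 1) * d] x) := by
            rw [show k + (t + 2) * d = (k + d) + (t + 1) * d by ring]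
            exact Function.iterate_add_apply s (k + d) ((t + 1) * d) x
          have step : s^[k + (t + 2) * d] x ≤ s^[k + (t + 1) * d] x := by
            rw [e1, e2]; exact h _
          exact le_trans step (ih x)
      intro x
      have hx := hd (p - 1) x
      rw [show (p - 1) + 1 = p by omega,
        show k + p * d = k + d * p by ring, hper k hk1 d] at hx
      exact hx
  exact ⟨key, funext fun x => le_antisymm (h x) (key x)⟩
end

section
/- Fix integers 2 ≤ m ≤ n. Let (L, ≤) be a partial order with monotone s, t : L → L satisfying s x ≤ t x for all x, s^[m] = s, and t^[n] = t, and let 1 ≤ j ≤ m−1 and 1 ≤ k ≤ n−1. Then: (a) s^[j] x ≤ t^[k] x holds for all x ∈ L if and only if s^[j] ∘ t = s^[k] ∘ t; and (b) if t^[k] x ≤ s^[j] x for all x ∈ L, then t^[k] = s^[j]. -/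
/-- For `1 ≤ j ≤ m-1` and `1 ≤ k ≤ n-1`: (a) `s^[j] ≤ t^[k]` pointwise iff
`s^[j] ∘ t = s^[k] ∘ t`; (b) if `t^[k] ≤ s^[j]` pointwise then `t^[k] = s^[j]`. -/
theorem mixed_order_collapse {L : Type*} [PartialOrder L] (m n : ℕ)
    (hm : 2 ≤ m) (hmn : m ≤ n)
    (s t : L → L) (hs : Monotone s) (ht : Monotone t) (hst : ∀ x, s x ≤ t x)
    (hsm : s^[m] = s) (htn : t^[n] = t)
    (j k : ℕ) (hj1 : 1 ≤ j) (hjm : j ≤ m - 1) (hk1 : 1 ≤ k) (hkn : k ≤ n - 1) :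
    ((∀ x, s^[j] x ≤ t^[k] x) ↔ s^[j] ∘ t = s^[k] ∘ t) ∧
    ((∀ x, t^[k] x ≤ s^[j] x) → t^[k] = s^[j]) := by
  obtain ⟨M, rfl⟩ : ∃ M, m = M + 1 := ⟨m - 1, by omega⟩
  obtain ⟨N, rfl⟩ : ∃ N, n = N + 1 := ⟨n - 1, by omega⟩
  have hM : 1 ≤ M := by omega
  have hN : 1 ≤ N := by omega
  have hjM : j ≤ M := by omega
  have hkN : k ≤ N := by omega
  have hNMN : N ≤ M * N := Nat.le_mul_of_pos_left N (by omega)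
  have hkMN : k ≤ M * N := hkN.trans hNMN
  have hMN : 1 ≤ M * N := hN.trans hNMN
  -- one-step periodicity
  have per1s : ∀ b, 1 ≤ b → s^[b + M] = s^[b] := by
    intro b hb
    obtain ⟨c, rfl⟩ : ∃ c, b = c + 1 := ⟨b - 1, by omega⟩
    calc s^[c + 1 + M] = s^[c + (M + 1)] := by ring_nf
      _ = s^[c] ∘ s^[M + 1] := Function.iterate_add s c (M + 1)
      _ = s^[c] ∘ s := by rw [hsm]
      _ = s^[c + 1] := (Function.iterate_succ s c).symm
  have per1t : ∀ b, 1 ≤ b → t^[b + N] = t^[b] := by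
    intro b hb
    obtain ⟨c, rfl⟩ : ∃ c, b = c + 1 := ⟨b - 1, by omega⟩
    calc t^[c + 1 + N] = t^[c + (N + 1)] := by ring_nf
      _ = t^[c] ∘ t^[N + 1] := Function.iterate_add t c (N + 1)
      _ = t^[c] ∘ t := by rw [htn]
      _ = t^[c + 1] := (Function.iterate_succ t c).symm
  -- full periodicity
  have pers : ∀ q a, 1 ≤ a → s^[a + q * M] = s^[a] := by
    intro q
    induction q with
    | zero => intro a _; simp
    | succ q ih =>
      intro a ha
      have h1 : a + (q + 1) * M = (a + q * M) + M := by ring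
      rw [h1, per1s (a + q * M) (by omega), ih a ha]
  have pert : ∀ q a, 1 ≤ a → t^[a + q * N] = t^[a] := by
    intro q
    induction q with
    | zero => intro a _; simp
    | succ q ih =>
      intro a ha
      have h1 : a + (q + 1) * N = (a + q * N) + N := by ring
      rw [h1, per1t (a + q * N) (by omega), ih a ha]
  -- absorbing a single t
  have tsucc : ∀ (a : ℕ) (x : L), t^[a] (t x) = t^[a + 1] x := by
    intro a x
    rw [Function.iterate_add_apply t a 1 x]
    simp
  -- mixing lemma from s ≤ t
  have mixV : ∀ v a b x, s^[a + v] (t^[b] x) ≤ s^[a] (t^[b + v] x) := by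
    intro v
    induction v with
    | zero => intro a b x; simp
    | succ v ih =>
      intro a b x
      have e1 : s^[a + (v + 1)] (t^[b] x) = s^[a + v] (s (t^[b] x)) := by
        rw [show a + (v + 1) = (a + v) + 1 by ring]
        exact Function.iterate_succ_apply s (a + v) (t^[b] x)
      have e2 : t (t^[b] x) = t^[b + 1] x := (Function.iterate_succ_apply' t b x).symm
      calc s^[a + (v + 1)] (t^[b] x) = s^[a + v] (s (t^[b] x)) := e1
        _ ≤ s^[a + v] (t (t^[b] x)) := (hs.iterate (a + v)) (hst _)
        _ = s^[a + v] (t^[b + 1] x) := by rw [e2]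
        _ ≤ s^[a] (t^[(b + 1) + v] x) := ih a (b + 1) x
        _ = s^[a] (t^[b + (v + 1)] x) := by ring_nf
  refine ⟨⟨fun H => ?_, fun HE x => ?_⟩, fun h => ?_⟩
  · -- forward of (a): s^[j] ≤ t^[k] pointwise implies s^[j] ∘ t = s^[k] ∘ t
    -- mixing lemma from H
    have mixU : ∀ u a b x, s^[a + u * j] (t^[b] x) ≤ s^[a] (t^[b + u * k] x) := by
      intro u
      induction u with
      | zero => intro a b x; simp
      | succ u ih =>
        intro a b x
        have e1 : s^[a + (u + 1) * j] (t^[b] x) = s^[a + u * j] (s^[j] (t^[b] x)) := by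
          rw [show a + (u + 1) * j = (a + u * j) + j by ring]
          exact Function.iterate_add_apply s (a + u * j) j (t^[b] x)
        have e2 : t^[k] (t^[b] x) = t^[b + k] x := by
          rw [show b + k = k + b by ring]
          exact (Function.iterate_add_apply t k b x).symm
        calc s^[a + (u + 1) * j] (t^[b] x) = s^[a + u * j] (s^[j] (t^[b] x)) := e1
          _ ≤ s^[a + u * j] (t^[k] (t^[b] x)) := (hs.iterate (a + u * j)) (H _)
          _ = s^[a + u * j] (t^[b + k] x) := by rw [e2]
          _ ≤ s^[a] (t^[(b + k) + u * k] x) := ih a (b + k) x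
          _ = s^[a] (t^[b + (u + 1) * k] x) := by ring_nf
    funext x
    simp only [Function.comp_apply]
    apply le_antisymm
    · -- s^[j] (t x) ≤ s^[k] (t x), via u = 1 H-step and (M*N - k) basic steps
      have e0 : s^[j] (t x) = s^[(k + j) + (M * N - k)] (t^[0] (t x)) := by
        have hc : N * M = M * N := Nat.mul_comm N M
        have h5 : (k + j) + (M * N - k) = j + N * M := by omega
        rw [h5, pers N j hj1]
        simp
      have e3 : t^[(M * N - k) + 1 * k] (t x) = t x := by
        have h4 : (M * N - k) + 1 * k = M * N := by omega
        rw [h4, tsucc (M * N) x, show M * N + 1 = 1 + M * N by ring, pert M 1 le_rfl]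
        simp
      calc s^[j] (t x) = s^[(k + j) + (M * N - k)] (t^[0] (t x)) := e0
        _ ≤ s^[k + j] (t^[0 + (M * N - k)] (t x)) := mixV (M * N - k) (k + j) 0 (t x)
        _ = s^[k + 1 * j] (t^[M * N - k] (t x)) := by ring_nf
        _ ≤ s^[k] (t^[(M * N - k) + 1 * k] (t x)) := mixU 1 k (M * N - k) (t x)
        _ = s^[k] (t x) := by rw [e3]
    · -- s^[k] (t x) ≤ s^[j] (t x), via u = M*N - 1 H-steps and k basic steps
      have hb1 : (M * N - 1) * j = M * N * j - j := Nat.sub_one_mul (M * N) j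
      have hb2 : (M * N - 1) * k = M * N * k - k := Nat.sub_one_mul (M * N) k
      have hj5 : j ≤ M * N * j := Nat.le_mul_of_pos_left j (by omega)
      have hk5 : k ≤ M * N * k := Nat.le_mul_of_pos_left k (by omega)
      have e0 : s^[k] (t x) = s^[(j + (M * N - 1) * j) + k] (t^[0] (t x)) := by
        have hc : N * j * M = M * N * j := by ring
        have h4 : (j + (M * N - 1) * j) + k = k + (N * j) * M := by omega
        rw [h4, pers (N * j) k hk1]
        simp
      have e3 : t^[k + (M * N - 1) * k] (t x) = t x := by
        have hc : M * k * N = M * N * k := by ring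
        have h4 : k + (M * N - 1) * k = 1 + (M * k) * N - 1 := by omega
        rw [tsucc (k + (M * N - 1) * k) x, show k + (M * N - 1) * k + 1 = 1 + (M * k) * N by omega,
          pert (M * k) 1 le_rfl]
        simp
      calc s^[k] (t x) = s^[(j + (M * N - 1) * j) + k] (t^[0] (t x)) := e0
        _ ≤ s^[j + (M * N - 1) * j] (t^[0 + k] (t x)) := mixV k (j + (M * N - 1) * j) 0 (t x)
        _ = s^[j + (M * N - 1) * j] (t^[k] (t x)) := by ring_nf
        _ ≤ s^[j] (t^[k + (M * N - 1) * k] (t x)) := mixU (M * N - 1) j k (t x)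
        _ = s^[j] (t x) := by rw [e3]
  · -- reverse of (a)
    have step : s^[j + 1] x ≤ t^[k + 1] x := by
      have e1 : s^[j + 1] x = s^[j] (s x) := Function.iterate_succ_apply s j x
      have e2 : s^[j] (t x) = s^[k] (t x) := congrFun HE x
      have e3 : s^[0 + k] (t^[1] x) ≤ s^[0] (t^[1 + k] x) := mixV k 0 1 x
      calc s^[j + 1] x = s^[j] (s x) := e1
        _ ≤ s^[j] (t x) := (hs.iterate j) (hst x)
        _ = s^[k] (t x) := e2
        _ ≤ t^[k + 1] x := by simpa [show 1 + k = k + 1 by ring] using e3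
    have e0 : s^[j] x = s^[M * N - 1] (s^[j + 1] x) := by
      have hc : N * M = M * N := Nat.mul_comm N M
      conv_lhs => rw [show s^[j] = s^[j + N * M] from (pers N j hj1).symm]
      rw [show j + N * M = (M * N - 1) + (j + 1) by omega]
      exact Function.iterate_add_apply s (M * N - 1) (j + 1) x
    have e4 : s^[0 + (M * N - 1)] (t^[k + 1] x) ≤ s^[0] (t^[(k + 1) + (M * N - 1)] x) :=
      mixV (M * N - 1) 0 (k + 1) x
    have e5 : t^[(k + 1) + (M * N - 1)] x = t^[k] x := by
      rw [show (k + 1) + (M * N - 1) = k + M * N by omega, pert M k hk1]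
    calc s^[j] x = s^[M * N - 1] (s^[j + 1] x) := e0
      _ ≤ s^[M * N - 1] (t^[k + 1] x) := (hs.iterate (M * N - 1)) step
      _ ≤ t^[(k + 1) + (M * N - 1)] x := by simpa using e4
      _ = t^[k] x := e5
  · -- part (b)
    have hsj_le : ∀ x, s^[j] x ≤ t^[j] x := by
      intro x
      have := mixV j 0 0 x
      simpa using this
    have h2 : ∀ x, t^[k] x ≤ t^[j] x := fun x => (h x).trans (hsj_le x)
    -- chain lemma
    have chainC : ∀ u c x, t^[u * k + c] x ≤ t^[u * j + c] x := by
      intro u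
      induction u with
      | zero => intro c x; simp
      | succ u ih =>
        intro c x
        have e1 : t^[(u + 1) * k + c] x = t^[k] (t^[u * k + c] x) := by
          rw [show (u + 1) * k + c = k + (u * k + c) by ring]
          exact Function.iterate_add_apply t k (u * k + c) x
        have e2 : t^[j] (t^[u * j + c] x) = t^[(u + 1) * j + c] x := by
          rw [show (u + 1) * j + c = j + (u * j + c) by ring]
          exact (Function.iterate_add_apply t j (u * j + c) x).symm
        calc t^[(u + 1) * k + c] x = t^[k] (t^[u * k + c] x) := e1
          _ ≤ t^[j] (t^[u * k + c] x) := h2 _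
          _ ≤ t^[j] (t^[u * j + c] x) := (ht.iterate j) (ih c x)
          _ = t^[(u + 1) * j + c] x := e2
    have h3 : ∀ x, t^[j] x ≤ t^[k] x := by
      intro x
      have hchain := chainC (N - 1) (k + j) x
      have hb1 : (N - 1) * k = N * k - k := Nat.sub_one_mul N k
      have hb2 : (N - 1) * j = N * j - j := Nat.sub_one_mul N j
      have hk5 : k ≤ N * k := Nat.le_mul_of_pos_left k (by omega)
      have hj5 : j ≤ N * j := Nat.le_mul_of_pos_left j (by omega)
      have hc1 : k * N = N * k := Nat.mul_comm k N
      have hc2 : j * N = N * j := Nat.mul_comm j N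
      have e1 : (N - 1) * k + (k + j) = j + k * N := by omega
      have e2 : (N - 1) * j + (k + j) = k + j * N := by omega
      rw [e1, e2, pert k j hj1, pert j k hk1] at hchain
      exact hchain
    have hjk : t^[j] = t^[k] := funext fun x => le_antisymm (h3 x) (h2 x)
    funext x
    exact le_antisymm (h x) (le_of_le_of_eq (hsj_le x) (congrFun hjk x))
end
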